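/- arXiv:1208.5687 — 5 statements merged into one kernel-verified Lean document; each statement's English description precedes it below -/
import Mathlib

section
/- Let n ≥ 2 and let ζ ∈ ℂ be a primitive n-th root of unity, and set z_i = ζ^i for 1 ≤ i ≤ n (these are n distinct points). If p is a complex polynomial such that z_1, …, z_n form a super-attracting cycle for N_p (i.e. p(ζ^i) ≠ 0, p′(ζ^i) ≠ 0, N_p(ζ^i) = ζ^{i+1} for all i with ζ^{n+1} := ζ, and p″(ζ^i) = 0 for some i), then deg p ≥ n + 1. -/
lemma aux_factor_ne (ζ : ℂ) (n : ℕ) (hn : 1 ≤ n) (hζn : ζ ^ n = 1) (k : ℕ) :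
    1 - (1 - ζ) * k ≠ 0 := by
  intro h
  rcases Nat.eq_zero_or_pos k with hk | hk
  · simp [hk] at h
  have hkC : (k : ℂ) ≠ 0 := Nat.cast_ne_zero.mpr (by omega)
  have hζ : ζ * k = ((k - 1 : ℕ) : ℂ) := by
    push_cast [Nat.cast_sub hk]
    linear_combination h
  have h2 : (((k-1)^n : ℕ) : ℂ) = ((k^n : ℕ) : ℂ) := by
    push_cast [Nat.cast_sub hk]
    calc ((k:ℂ) - 1)^n = (ζ * k)^n := by rw [hζ]; push_cast [Nat.cast_sub hk]; ring
    _ = (k:ℂ)^n := by rw [mul_pow, hζn, one_mul]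
  have h3 : (k-1)^n = k^n := Nat.cast_injective h2
  have : (k-1)^n < k^n := Nat.pow_lt_pow_left (by omega) (by omega)
  omega

lemma aux_pow_inj (ζ : ℂ) (n : ℕ) (hζ0 : ζ ≠ 0)
    (hζprim : ∀ k : ℕ, 0 < k → k < n → ζ ^ k ≠ 1) :
    ∀ i ∈ Finset.Icc 1 n, ∀ j ∈ Finset.Icc 1 n, ζ ^ i = ζ ^ j → i = j := by
  have key : ∀ i j : ℕ, 1 ≤ i → j ≤ n → i < j → ζ ^ i = ζ ^ j → False := by
    intro i j hi1 hjn hij h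
    have h2 : ζ ^ i * ζ ^ (j - i) = ζ ^ i * 1 := by
      rw [mul_one, ← pow_add, show i + (j - i) = j from by omega]
      exact h.symm
    have hji : ζ ^ (j - i) = 1 := mul_left_cancel₀ (pow_ne_zero i hζ0) h2
    exact hζprim (j - i) (by omega) (by omega) hji
  intro i hi j hj h
  simp only [Finset.mem_Icc] at hi hj
  rcases lt_trichotomy i j with hlt | heq | hgt
  · exact absurd h (fun h => key i j hi.1 hj.2 hlt h)
  · exact heq
  · exact absurd h.symm (fun h => key j i hj.1 hi.2 hgt h)

/-- The Newton map of a complex polynomial `p`: `N_p(z) = z - p(z)/p'(z)`. -/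
noncomputable def newtonMap (p : Polynomial ℂ) (z : ℂ) : ℂ :=
  z - p.eval z / p.derivative.eval z

/-- Let `n ≥ 2` and let `ζ` be a primitive `n`-th root of unity (`ζ^n = 1` and
`ζ^k ≠ 1` for `0 < k < n`), and set `z_i = ζ^i` for `1 ≤ i ≤ n`.  If `p` is a complex
polynomial such that these points form a super-attracting cycle for `N_p`
(`p(ζ^i) ≠ 0`, `p'(ζ^i) ≠ 0`, `N_p(ζ^i) = ζ^(i+1)` for all `1 ≤ i ≤ n`, and
`p''(ζ^i) = 0` for some `1 ≤ i ≤ n`), then `deg p ≥ n + 1`. -/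
theorem newton_superattracting_cycle_roots_of_unity_degree_ge
    (n : ℕ) (hn : 2 ≤ n) (ζ : ℂ)
    (hζn : ζ ^ n = 1) (hζprim : ∀ k : ℕ, 0 < k → k < n → ζ ^ k ≠ 1)
    (p : Polynomial ℂ)
    (hcycle : ∀ i ∈ Finset.Icc 1 n,
      p.eval (ζ ^ i) ≠ 0 ∧
      p.derivative.eval (ζ ^ i) ≠ 0 ∧
      newtonMap p (ζ ^ i) = ζ ^ (i + 1))
    (hsuper : ∃ i ∈ Finset.Icc 1 n, p.derivative.derivative.eval (ζ ^ i) = 0) :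
    n + 1 ≤ p.natDegree := by
  open Polynomial in
  · by_contra hlt
    push_neg at hlt
    have hdeg : p.natDegree ≤ n := by omega
    have hζ0 : ζ ≠ 0 := by
      intro h; rw [h, zero_pow (by omega : n ≠ 0)] at hζn; exact zero_ne_one hζn
    obtain ⟨r, hr⟩ : ∃ q : ℂ[X], q = p - C (1 - ζ) * (X * derivative p) := ⟨_, rfl⟩
    have hrcoeff : ∀ k : ℕ, r.coeff k = p.coeff k * (1 - (1 - ζ) * k) := by
      intro k
      rcases k with _ | m
      · rw [hr, coeff_sub, coeff_C_mul, mul_coeff_zero, coeff_X_zero]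
        push_cast; ring
      · rw [hr, coeff_sub, coeff_C_mul, coeff_X_mul, coeff_derivative]
        push_cast; ring
    have hpk : ∀ k, n < k → p.coeff k = 0 := fun k hk =>
      coeff_eq_zero_of_natDegree_lt (lt_of_le_of_lt hdeg hk)
    have hrk : ∀ k, n < k → r.coeff k = 0 := by
      intro k hk; rw [hrcoeff, hpk k hk, zero_mul]
    have hrev : ∀ i ∈ Finset.Icc 1 n, r.eval (ζ ^ i) = 0 := by
      intro i hi
      obtain ⟨h1, h2, h3⟩ := hcycle i hi
      have h4 : p.eval (ζ ^ i) = (1 - ζ) * (ζ ^ i * p.derivative.eval (ζ ^ i)) := by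
        unfold _root_.newtonMap at h3
        field_simp at h3
        rw [pow_succ] at h3
        linear_combination -h3
      rw [hr]
      simp only [eval_sub, eval_mul, eval_C, eval_X, h4]
      ring
    obtain ⟨s, hs⟩ : ∃ q : ℂ[X], q = r - C (r.coeff n) * (X ^ n - 1) := ⟨_, rfl⟩
    have hxc : ∀ N : ℕ, (X ^ n - 1 : ℂ[X]).coeff N
        = (if N = n then 1 else 0) - (if N = 0 then 1 else 0) := by
      intro N; rw [coeff_sub, coeff_X_pow, coeff_one]
    have hwn : ∀ i : ℕ, (ζ ^ i) ^ n = 1 := by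
      intro i; rw [← pow_mul, mul_comm, pow_mul, hζn, one_pow]
    have hsev : ∀ i ∈ Finset.Icc 1 n, s.eval (ζ ^ i) = 0 := by
      intro i hi
      rw [hs]
      simp [hrev i hi, hwn i]
    have hcard : n ≤ ((Finset.Icc 1 n).image (fun i : ℕ => ζ ^ i)).card := by
      rw [Finset.card_image_of_injOn (fun i hi j hj h =>
        aux_pow_inj ζ n hζ0 hζprim i hi j hj h), Nat.card_Icc]
      omega
    have hsdeg : s.natDegree < n := by
      have h1 : s.natDegree ≤ n - 1 := by
        rw [natDegree_le_iff_coeff_eq_zero]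
        intro N hN
        have hNn : n ≤ N := by omega
        rw [hs, coeff_sub, coeff_C_mul, hxc]
        rcases eq_or_lt_of_le hNn with rfl | hNgt
        · rw [if_pos rfl, if_neg (by omega : ¬ n = 0)]; ring
        · rw [hrk N hNgt, if_neg (by omega : ¬ N = n), if_neg (by omega : ¬ N = 0)]; ring
      omega
    have hs0 : s = 0 := by
      apply eq_zero_of_natDegree_lt_card_of_eval_eq_zero' s
        ((Finset.Icc 1 n).image (fun i : ℕ => ζ ^ i))
      · intro x hx
        obtain ⟨i, hi, rfl⟩ := Finset.mem_image.mp hx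
        exact hsev i hi
      · omega
    have hreq : r = C (r.coeff n) * (X ^ n - 1) := by
      rw [hs] at hs0
      exact sub_eq_zero.mp hs0
    have hfac := aux_factor_ne ζ n (by omega) hζn
    have hmid : ∀ k, 0 < k → k < n → p.coeff k = 0 := by
      intro k hk1 hk2
      have h1 : r.coeff k = 0 := by
        conv_lhs => rw [hreq]
        rw [coeff_C_mul, hxc, if_neg (by omega : ¬ k = n), if_neg (by omega : ¬ k = 0)]
        ring
      rw [hrcoeff k] at h1
      exact (mul_eq_zero.mp h1).resolve_right (hfac k)
    have hp_eq : p = C (p.coeff n) * X ^ n + C (p.coeff 0) := by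
      ext k
      rw [coeff_add, coeff_C_mul, coeff_X_pow, coeff_C]
      by_cases hkn : k = n
      · rw [if_pos hkn, if_neg (by omega : ¬ k = 0), mul_one, add_zero, hkn]
      · rw [if_neg hkn, mul_zero, zero_add]
        by_cases hk0 : k = 0
        · rw [if_pos hk0, hk0]
        · rw [if_neg hk0]
          rcases lt_or_gt_of_ne hkn with hlt2 | hgt
          · exact hmid k (by omega) hlt2
          · exact hpk k hgt
    obtain ⟨i₀, hi₀, hpp⟩ := hsuper
    rw [hp_eq] at hpp
    simp only [derivative_add, derivative_C, derivative_C_mul, derivative_X_pow,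
      add_zero, eval_mul, eval_C, eval_pow, eval_X, eval_natCast] at hpp
    have hz : (ζ ^ i₀) ≠ 0 := pow_ne_zero _ hζ0
    have han : p.coeff n = 0 := by
      have h1 : ((n : ℂ)) ≠ 0 := Nat.cast_ne_zero.mpr (by omega)
      have h2 : (((n - 1 : ℕ) : ℂ)) ≠ 0 := Nat.cast_ne_zero.mpr (by omega)
      have h3 : (ζ ^ i₀) ^ (n - 1 - 1) ≠ 0 := pow_ne_zero _ hz
      exact (mul_eq_zero.mp hpp).resolve_right (mul_ne_zero h1 (mul_ne_zero h2 h3))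
    have hc0 : r.coeff n = 0 := by rw [hrcoeff n, han, zero_mul]
    have ha0 : p.coeff 0 = 0 := by
      have h1 : r.coeff 0 = p.coeff 0 := by rw [hrcoeff]; push_cast; ring
      have h2 : r.coeff 0 = 0 := by
        conv_lhs => rw [hreq]
        rw [coeff_C_mul, hxc, if_neg (by omega : ¬ (0:ℕ) = n), if_pos rfl, hc0]
        ring
      rw [h2] at h1
      exact h1.symm
    have hp0 : p = 0 := by rw [hp_eq, han, ha0]; simp
    obtain ⟨h1, -, -⟩ := hcycle 1 (by simp; omega)
    rw [hp0] at h1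
    simp at h1
end

section
/- Fix an integer d ≥ 3. There exist sequences (c_k)_{k ≥ 1} and (b_k)_{k ≥ 1} of positive real numbers such that for every k ≥ 1: c_k is the least element of {y > 0 : y^d = Q_k(y)^d}, b_k is the least element of {y > 0 : (d−1)y^d = d·Q_k(y)^{d−1}}, and 0 < c_{k+1} < b_{k+1} < c_k < b_k; moreover c_1 = 1 and b_1 = (d/(d−1))^{1/d}. -/
/-- For a fixed degree `d`, the functions `Q_k : ℝ → ℝ` defined recursively by
`Q_1(y) = 1` and
`Q_{k+1}(y) = ((d−1)y^d − (d−1)Q_k(y)^d)/((d−1)y^d − d·Q_k(y)^(d−1))` (for `k ≥ 1`);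
`Q d 0` is set to the constant `0`, and is never used below. -/
noncomputable def Q (d : ℕ) : ℕ → ℝ → ℝ
  | 0, _ => 0
  | 1, _ => 1
  | (k + 2), y =>
      (((d : ℝ) - 1) * y ^ d - ((d : ℝ) - 1) * (Q d (k + 1) y) ^ d) /
        (((d : ℝ) - 1) * y ^ d - (d : ℝ) * (Q d (k + 1) y) ^ (d - 1))

lemma Q_one (d : ℕ) (y : ℝ) : Q d 1 y = 1 := rfl

lemma Q_succ_succ (d k : ℕ) (y : ℝ) :
    Q d (k + 2) y =
      (((d : ℝ) - 1) * y ^ d - ((d : ℝ) - 1) * (Q d (k + 1) y) ^ d) /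
        (((d : ℝ) - 1) * y ^ d - (d : ℝ) * (Q d (k + 1) y) ^ (d - 1)) := rfl

def QInv (d k : ℕ) (c : ℝ) : Prop :=
  0 < c ∧ c ≤ 1 ∧ ContinuousOn (Q d k) (Set.Icc 0 c) ∧
    (∀ y, 0 ≤ y → y < c → y < Q d k y) ∧ Q d k c = c

lemma qinv_one (d : ℕ) : QInv d 1 1 := by
  refine ⟨one_pos, le_refl _, continuousOn_const, fun y _ hy => ?_, rfl⟩
  simpa [Q_one] using hy

lemma keyineq {d : ℕ} (hd : 3 ≤ d) {y q : ℝ} (hy0 : 0 < y) (hy1 : y ≤ 1) (hyq : y ≤ q) :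
    ((d : ℝ) - 1) * y ^ d < (d : ℝ) * q ^ (d - 1) := by
  have hD : (3 : ℝ) ≤ (d : ℝ) := by exact_mod_cast hd
  have hyd1 : (0 : ℝ) < y ^ (d - 1) := pow_pos hy0 _
  have h1 : y ^ d = (y * y ^ (d - 1)) := by
    rw [← pow_succ']
    congr 1
    omega
  have h2 : ((d : ℝ) - 1) * y ^ d = (((d : ℝ) - 1) * y) * y ^ (d - 1) := by rw [h1]; ring
  have h3 : (((d : ℝ) - 1) * y) * y ^ (d - 1) < (d : ℝ) * y ^ (d - 1) := by
    apply mul_lt_mul_of_pos_right _ hyd1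
    nlinarith
  have h4 : (d : ℝ) * y ^ (d - 1) ≤ (d : ℝ) * q ^ (d - 1) := by
    apply mul_le_mul_of_nonneg_left (pow_le_pow_left₀ hy0.le hyq _) (by linarith)
  linarith [h2 ▸ h3]

lemma isLeast_A {d k : ℕ} (hd : 3 ≤ d) {c : ℝ} (h : QInv d k c) :
    IsLeast {y : ℝ | 0 < y ∧ y ^ d = (Q d k y) ^ d} c := by
  obtain ⟨hc0, hc1, _, hlt, heq⟩ := h
  refine ⟨⟨hc0, by rw [heq]⟩, fun y hy => ?_⟩
  obtain ⟨hy0, hyeq⟩ := hy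
  by_contra hcy
  push_neg at hcy
  have := hlt y hy0.le hcy
  have : y ^ d < (Q d k y) ^ d := pow_lt_pow_left₀ this hy0.le (by omega)
  linarith [hyeq ▸ this]

lemma step {d : ℕ} (hd : 3 ≤ d) {m : ℕ} {c : ℝ} (h : QInv d (m + 1) c) :
    ∃ c' b : ℝ, QInv d (m + 2) c' ∧
      IsLeast {y : ℝ | 0 < y ∧ ((d : ℝ) - 1) * y ^ d = (d : ℝ) * (Q d (m + 2) y) ^ (d - 1)} b ∧
      c' < b ∧ b < c := by
  obtain ⟨hc0, hc1, hcont, hlt, heq⟩ := h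
  have hD : (3 : ℝ) ≤ (d : ℝ) := by exact_mod_cast hd
  have hdne : d ≠ 0 := by omega
  have hd1ne : d - 1 ≠ 0 := by omega
  set D : ℝ := (d : ℝ) with hDdef
  -- Q_{m+1} ≥ y on [0,c], positive
  have hQge : ∀ y ∈ Set.Icc (0:ℝ) c, y ≤ Q d (m + 1) y := by
    intro y ⟨hy0, hyc⟩
    rcases lt_or_eq_of_le hyc with hlt' | rfl
    · exact (hlt y hy0 hlt').le
    · exact heq.ge
  have hQpos : ∀ y ∈ Set.Icc (0:ℝ) c, 0 < Q d (m + 1) y := by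
    intro y hy
    rcases lt_or_eq_of_le hy.1 with hy0 | rfl
    · exact lt_of_lt_of_le hy0 (hQge y hy)
    · exact hlt 0 le_rfl hc0
  -- denominator negative on [0,c]
  have hfD : ∀ y ∈ Set.Icc (0:ℝ) c,
      (D - 1) * y ^ d - D * (Q d (m + 1) y) ^ (d - 1) < 0 := by
    intro y hy
    rcases lt_or_eq_of_le hy.1 with hy0 | rfl
    · have := keyineq hd hy0 (hy.2.trans hc1) (hQge y hy)
      linarith
    · have : (0:ℝ) ^ d = 0 := zero_pow hdne
      have hq := hQpos 0 hy
      have : D * (Q d (m + 1) 0) ^ (d - 1) > 0 :=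
        mul_pos (by linarith) (pow_pos hq _)
      simp only [zero_pow hdne, mul_zero]
      linarith
  -- continuity of Q_{m+2} on [0,c]
  have hcont2 : ContinuousOn (Q d (m + 2)) (Set.Icc 0 c) := by
    have hnum : ContinuousOn
        (fun y => (D - 1) * y ^ d - (D - 1) * (Q d (m + 1) y) ^ d) (Set.Icc 0 c) := by
      apply ContinuousOn.sub
      · exact (continuousOn_const.mul (continuousOn_pow d))
      · exact continuousOn_const.mul (hcont.pow d)
    have hden : ContinuousOn
        (fun y => (D - 1) * y ^ d - D * (Q d (m + 1) y) ^ (d - 1)) (Set.Icc 0 c) := by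
      apply ContinuousOn.sub
      · exact (continuousOn_const.mul (continuousOn_pow d))
      · exact continuousOn_const.mul (hcont.pow (d - 1))
    have : ContinuousOn (fun y =>
        ((D - 1) * y ^ d - (D - 1) * (Q d (m + 1) y) ^ d) /
          ((D - 1) * y ^ d - D * (Q d (m + 1) y) ^ (d - 1))) (Set.Icc 0 c) :=
      hnum.div hden (fun y hy => (hfD y hy).ne)
    exact this
  -- positivity of Q_{m+2} on [0,c)
  have hpos2 : ∀ y ∈ Set.Ico (0:ℝ) c, 0 < Q d (m + 2) y := by
    intro y ⟨hy0, hyc⟩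
    rw [Q_succ_succ]
    apply div_pos_of_neg_of_neg
    · have h1 : y < Q d (m + 1) y := hlt y hy0 hyc
      have : y ^ d < (Q d (m + 1) y) ^ d := pow_lt_pow_left₀ h1 hy0 hdne
      nlinarith
    · exact hfD y ⟨hy0, hyc.le⟩
  -- value at c
  have hQc : Q d (m + 2) c = 0 := by
    rw [Q_succ_succ, heq]
    simp
  -- fixed point of Q_{m+2}
  set g : ℝ → ℝ := fun y => Q d (m + 2) y - y with hgdef
  have hgcont : ContinuousOn g (Set.Icc 0 c) := hcont2.sub continuousOn_id
  have hg0 : 0 < g 0 := by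
    have := hpos2 0 ⟨le_rfl, hc0⟩
    simpa [hgdef] using this
  have hgc : g c < 0 := by simp [hgdef, hQc, hc0]
  set S : Set ℝ := Set.Icc 0 c ∩ g ⁻¹' {0} with hSdef
  have hScl : IsClosed S :=
    hgcont.preimage_isClosed_of_isClosed isClosed_Icc isClosed_singleton
  have hScomp : IsCompact S :=
    isCompact_Icc.of_isClosed_subset hScl Set.inter_subset_left
  have hSne : S.Nonempty := by
    have hsub := intermediate_value_Icc' hc0.le hgcont
    have : (0:ℝ) ∈ Set.Icc (g c) (g 0) := ⟨hgc.le, hg0.le⟩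
    obtain ⟨x, hx, hgx⟩ := hsub this
    exact ⟨x, hx, by simpa using hgx⟩
  obtain ⟨c', ⟨hc'I, hc'g⟩, hc'least⟩ := hScomp.exists_isLeast hSne
  have hc'fix : Q d (m + 2) c' = c' := by
    have : g c' = 0 := hc'g
    simpa [hgdef, sub_eq_zero] using this
  have hc'pos : 0 < c' := by
    rcases lt_or_eq_of_le hc'I.1 with h | h
    · exact h
    · exfalso; have := hpos2 0 ⟨le_rfl, hc0⟩
      rw [← h] at hc'fix; rw [hc'fix] at this; exact lt_irrefl _ this
  have hc'ltc : c' < c := by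
    rcases lt_or_eq_of_le hc'I.2 with h | h
    · exact h
    · exfalso; rw [h, hQc] at hc'fix; rw [h] at hc'pos; linarith [hc'fix ▸ hc0]
  have hlt2 : ∀ y, 0 ≤ y → y < c' → y < Q d (m + 2) y := by
    intro y hy0 hyc'
    by_contra hcon
    push_neg at hcon
    rcases lt_or_eq_of_le hcon with h' | h'
    · -- Q y < y : IVT gives earlier root
      have hy_le : y ≤ c := (hyc'.trans hc'ltc).le
      have hsub := intermediate_value_Icc' hy0 (hgcont.mono (Set.Icc_subset_Icc le_rfl hy_le))
      have hgy : g y < 0 := by simp [hgdef]; linarith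
      have : (0:ℝ) ∈ Set.Icc (g y) (g 0) := ⟨hgy.le, hg0.le⟩
      obtain ⟨x, hx, hgx⟩ := hsub this
      have hxS : x ∈ S := ⟨⟨hx.1, hx.2.trans hy_le⟩, by simpa using hgx⟩
      have := hc'least hxS
      linarith [hx.2]
    · have hyS : y ∈ S := ⟨⟨hy0, (hyc'.trans hc'ltc).le⟩, by simp [hgdef, sub_eq_zero, h']⟩
      have := hc'least hyS
      linarith
  have hinv2 : QInv d (m + 2) c' :=
    ⟨hc'pos, hc'ltc.le.trans hc1, hcont2.mono (Set.Icc_subset_Icc le_rfl hc'ltc.le),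
      hlt2, hc'fix⟩
  -- now the b root
  set B : ℝ → ℝ := fun y => D * (Q d (m + 2) y) ^ (d - 1) - (D - 1) * y ^ d with hBdef
  have hBcont : ContinuousOn B (Set.Icc 0 c) :=
    (continuousOn_const.mul (hcont2.pow (d - 1))).sub
      (continuousOn_const.mul (continuousOn_pow d))
  have hBpos : ∀ y ∈ Set.Icc (0:ℝ) c', 0 < B y := by
    intro y ⟨hy0, hyc'⟩
    rcases lt_or_eq_of_le hy0 with hy0' | rfl
    · have hyQ : y ≤ Q d (m + 2) y := by
        rcases lt_or_eq_of_le hyc' with h | rfl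
        · exact (hlt2 y hy0 h).le
        · exact hc'fix.ge
      have := keyineq hd hy0' (hyc'.trans (hc'ltc.le.trans hc1)) hyQ
      simp only [hBdef]; linarith
    · have := hpos2 0 ⟨le_rfl, hc0⟩
      have h1 : 0 < D * (Q d (m + 2) 0) ^ (d - 1) := mul_pos (by linarith) (pow_pos this _)
      simp only [hBdef, zero_pow hdne, mul_zero]
      linarith
  have hBc : B c < 0 := by
    have : (0:ℝ) ^ (d-1) = 0 := zero_pow hd1ne
    simp only [hBdef, hQc, this, mul_zero, zero_sub, neg_neg]
    have : 0 < (D - 1) * c ^ d := mul_pos (by linarith) (pow_pos hc0 _)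
    linarith
  set Sb : Set ℝ := Set.Icc 0 c ∩ B ⁻¹' {0} with hSbdef
  have hSbcl : IsClosed Sb :=
    hBcont.preimage_isClosed_of_isClosed isClosed_Icc isClosed_singleton
  have hSbcomp : IsCompact Sb :=
    isCompact_Icc.of_isClosed_subset hSbcl Set.inter_subset_left
  have hSbne : Sb.Nonempty := by
    have hsub := intermediate_value_Icc' hc'ltc.le
      (hBcont.mono (Set.Icc_subset_Icc hc'pos.le le_rfl))
    have hBc' : 0 < B c' := hBpos c' ⟨hc'pos.le, le_rfl⟩
    have : (0:ℝ) ∈ Set.Icc (B c) (B c') := ⟨hBc.le, hBc'.le⟩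
    obtain ⟨x, hx, hBx⟩ := hsub this
    exact ⟨x, ⟨hc'pos.le.trans hx.1, hx.2⟩, by simpa using hBx⟩
  obtain ⟨b, ⟨hbI, hbB⟩, hbleast⟩ := hSbcomp.exists_isLeast hSbne
  have hbB' : B b = 0 := hbB
  have hbgt : c' < b := by
    by_contra hcon
    push_neg at hcon
    have := hBpos b ⟨hbI.1, hcon⟩
    rw [hbB'] at this; exact lt_irrefl _ this
  have hbltc : b < c := by
    rcases lt_or_eq_of_le hbI.2 with h | h
    · exact h
    · exfalso; rw [h] at hbB'; rw [hbB'] at hBc; exact lt_irrefl _ hBc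
  refine ⟨c', b, hinv2, ⟨⟨hc'pos.trans hbgt, ?_⟩, ?_⟩, hbgt, hbltc⟩
  · simp only [hBdef] at hbB'; linarith
  · intro y ⟨hy0, hyeq⟩
    rcases le_or_gt y c with h | h
    · have hyS : y ∈ Sb := ⟨⟨hy0.le, h⟩, by simp [hBdef]; linarith⟩
      exact hbleast hyS
    · linarith

lemma isLeast_B_one {d : ℕ} (hd : 3 ≤ d) :
    IsLeast {y : ℝ | 0 < y ∧ ((d : ℝ) - 1) * y ^ d = (d : ℝ) * (Q d 1 y) ^ (d - 1)}
      (((d : ℝ) / ((d : ℝ) - 1)) ^ ((1 : ℝ) / d)) := by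
  have hD : (3 : ℝ) ≤ (d : ℝ) := by exact_mod_cast hd
  have hdne : (d : ℝ) ≠ 0 := by positivity
  have hx1 : (1 : ℝ) < (d : ℝ) / ((d : ℝ) - 1) := by
    rw [lt_div_iff₀ (by linarith)]; linarith
  have hx0 : (0 : ℝ) < (d : ℝ) / ((d : ℝ) - 1) := by linarith
  set b1 : ℝ := ((d : ℝ) / ((d : ℝ) - 1)) ^ ((1 : ℝ) / d) with hb1def
  have hb1pos : 0 < b1 := Real.rpow_pos_of_pos hx0 _
  have hb1pow : b1 ^ d = (d : ℝ) / ((d : ℝ) - 1) := by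
    rw [hb1def, ← Real.rpow_natCast (((d : ℝ) / ((d : ℝ) - 1)) ^ ((1 : ℝ) / d)) d,
      ← Real.rpow_mul hx0.le]
    rw [one_div, inv_mul_cancel₀ hdne, Real.rpow_one]
  have hmem : ((d : ℝ) - 1) * b1 ^ d = (d : ℝ) * (Q d 1 b1) ^ (d - 1) := by
    rw [Q_one, one_pow, mul_one, hb1pow, mul_comm,
      div_mul_cancel₀ _ (ne_of_gt (by linarith : (0:ℝ) < (d:ℝ) - 1))]
  refine ⟨⟨hb1pos, hmem⟩, fun y hy => ?_⟩
  obtain ⟨hy0, hyeq⟩ := hy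
  rw [Q_one, one_pow, mul_one] at hyeq
  have hyd : y ^ d = b1 ^ d := by
    rw [hb1pow, eq_div_iff (ne_of_gt (by linarith : (0:ℝ) < (d:ℝ) - 1))]
    linear_combination hyeq
  by_contra hcon
  push_neg at hcon
  have : y ^ d < b1 ^ d := pow_lt_pow_left₀ hcon hy0.le (by omega)
  linarith [hyd ▸ this]

lemma one_lt_b_one {d : ℕ} (hd : 3 ≤ d) :
    (1 : ℝ) < ((d : ℝ) / ((d : ℝ) - 1)) ^ ((1 : ℝ) / d) := by
  have hD : (3 : ℝ) ≤ (d : ℝ) := by exact_mod_cast hd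
  have hx1 : (1 : ℝ) < (d : ℝ) / ((d : ℝ) - 1) := by
    rw [lt_div_iff₀ (by linarith)]; linarith
  rw [Real.one_lt_rpow_iff_of_pos (by linarith)]
  left
  exact ⟨hx1, by positivity⟩

lemma qinv_all {d : ℕ} (hd : 3 ≤ d) :
    ∀ k : ℕ, QInv d (k + 1) (sInf {y : ℝ | 0 < y ∧ y ^ d = (Q d (k + 1) y) ^ d}) := by
  intro k
  induction k with
  | zero =>
    have h1 := qinv_one d
    have := (isLeast_A hd h1).csInf_eq
    rw [this]; exact h1
  | succ j ih =>
    obtain ⟨c', b', hinv, _, _, _⟩ := step hd ih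
    have := (isLeast_A hd hinv).csInf_eq
    rw [this]; exact hinv


/-- Fix an integer `d ≥ 3`.  There exist sequences `(c_k)` and `(b_k)` of positive reals
such that for every `k ≥ 1`: `c_k` is the least element of `{y > 0 : y^d = Q_k(y)^d}`,
`b_k` is the least element of `{y > 0 : (d−1)y^d = d·Q_k(y)^(d−1)}`, and
`0 < c_{k+1} < b_{k+1} < c_k < b_k`; moreover `c_1 = 1` and `b_1 = (d/(d−1))^(1/d)`. -/
theorem exists_interlacing_least_solutions_general_degree (d : ℕ) (hd : 3 ≤ d) :
    ∃ c b : ℕ → ℝ,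
      (∀ k : ℕ, 1 ≤ k → IsLeast {y : ℝ | 0 < y ∧ y ^ d = (Q d k y) ^ d} (c k)) ∧
      (∀ k : ℕ, 1 ≤ k →
        IsLeast {y : ℝ | 0 < y ∧ ((d : ℝ) - 1) * y ^ d = (d : ℝ) * (Q d k y) ^ (d - 1)}
          (b k)) ∧
      (∀ k : ℕ, 1 ≤ k →
        0 < c (k + 1) ∧ c (k + 1) < b (k + 1) ∧ b (k + 1) < c k ∧ c k < b k) ∧
      c 1 = 1 ∧ b 1 = ((d : ℝ) / ((d : ℝ) - 1)) ^ ((1 : ℝ) / d) := by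
  set cc : ℕ → ℝ := fun k => sInf {y : ℝ | 0 < y ∧ y ^ d = (Q d k y) ^ d} with hccdef
  set bb : ℕ → ℝ := fun k =>
    sInf {y : ℝ | 0 < y ∧ ((d : ℝ) - 1) * y ^ d = (d : ℝ) * (Q d k y) ^ (d - 1)} with hbbdef
  have hAinv : ∀ k : ℕ, QInv d (k + 1) (cc (k + 1)) := fun k => qinv_all hd k
  have hA : ∀ k : ℕ, 1 ≤ k → IsLeast {y : ℝ | 0 < y ∧ y ^ d = (Q d k y) ^ d} (cc k) := by
    intro k hk
    obtain ⟨j, rfl⟩ : ∃ j, k = j + 1 := ⟨k - 1, by omega⟩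
    exact isLeast_A hd (hAinv j)
  have hc1 : cc 1 = 1 := ((hA 1 le_rfl).unique (isLeast_A hd (qinv_one d)))
  have hb1 : bb 1 = ((d : ℝ) / ((d : ℝ) - 1)) ^ ((1 : ℝ) / d) :=
    (isLeast_B_one hd).csInf_eq
  -- step data at each level
  have hstep : ∀ j : ℕ,
      IsLeast {y : ℝ | 0 < y ∧ ((d : ℝ) - 1) * y ^ d = (d : ℝ) * (Q d (j + 2) y) ^ (d - 1)}
        (bb (j + 2)) ∧ cc (j + 2) < bb (j + 2) ∧ bb (j + 2) < cc (j + 1) := by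
    intro j
    obtain ⟨c', b', hinv, hBl, hcb, hbc⟩ := step hd (hAinv j)
    have hc' : cc (j + 2) = c' := (isLeast_A hd hinv).csInf_eq
    have hb' : bb (j + 2) = b' := hBl.csInf_eq
    rw [hc', hb']
    exact ⟨hBl, hcb, hbc⟩
  have hB : ∀ k : ℕ, 1 ≤ k →
      IsLeast {y : ℝ | 0 < y ∧ ((d : ℝ) - 1) * y ^ d = (d : ℝ) * (Q d k y) ^ (d - 1)} (bb k) := by
    intro k hk
    match k, hk with
    | 1, _ => rw [hb1]; exact isLeast_B_one hd
    | (j + 2), _ => exact (hstep j).1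
  refine ⟨cc, bb, hA, hB, ?_, hc1, hb1⟩
  intro k hk
  obtain ⟨j, rfl⟩ : ∃ j, k = j + 1 := ⟨k - 1, by omega⟩
  have h1 := hAinv (j + 1)
  have h2 := hstep j
  refine ⟨h1.1, h2.2.1, h2.2.2, ?_⟩
  match j with
  | 0 => rw [hc1, hb1]; exact one_lt_b_one hd
  | (i + 1) => exact (hstep i).2.1
end

section
/- Fix integers d ≥ 3 and n ≥ 3, let c be the least positive real number satisfying Q_{n−1}(c) = c, and define z_i = f_c^{i−1}(0) for 1 ≤ i ≤ n. Then the cycle is strictly decreasing from z_2 to z_n and stays in (0,1): namely 0 = z_1 < z_n < z_{n−1} < ⋯ < z_3 < z_2 = 1, i.e. z_{i+1} < z_i for all 2 ≤ i ≤ n−1 and 0 < z_n. -/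
/-- The rational map `f_c(x) = ((d−1)c^d − (d−1)x^d)/((d−1)c^d − d·x^(d−1))`,
whose iterates give `Q_k(c) = f_c^k(0)`. -/
noncomputable def f (d : ℕ) (c x : ℝ) : ℝ :=
  (((d : ℝ) - 1) * c ^ d - ((d : ℝ) - 1) * x ^ d) /
    (((d : ℝ) - 1) * c ^ d - (d : ℝ) * x ^ (d - 1))

open Set Filter Topology

namespace NCA
variable {d : ℕ}
lemma Qone (d : ℕ) (y : ℝ) : Q d 1 y = 1 := rfl
lemma Qone_fun (d : ℕ) : Q d 1 = fun _ : ℝ => (1:ℝ) := by funext y; rfl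
lemma Qstep (d k : ℕ) (y : ℝ) :
    Q d (k+2) y =
      (((d : ℝ) - 1) * y ^ d - ((d : ℝ) - 1) * (Q d (k + 1) y) ^ d) /
        (((d : ℝ) - 1) * y ^ d - (d : ℝ) * (Q d (k + 1) y) ^ (d - 1)) := rfl
lemma Qsucc (d k : ℕ) (y : ℝ) : Q d (k+2) y = f d y (Q d (k+1) y) := rfl
lemma cast_d_ge (hd : 3 ≤ d) : (3:ℝ) ≤ (d:ℝ) := by exact_mod_cast hd
lemma pow_d_eq (hd : 3 ≤ d) (x : ℝ) : x ^ d = x ^ (d-1) * x := by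
  conv_lhs => rw [← Nat.sub_add_cancel (show 1 ≤ d by omega)]
  rw [pow_succ]
lemma denom_neg (hd : 3 ≤ d) {y x : ℝ} (hy0 : 0 < y) (hyx : y ≤ x) (hx1 : x ≤ 1) :
    ((d:ℝ) - 1) * y ^ d - (d:ℝ) * x ^ (d-1) < 0 := by
  have h3 : (3:ℝ) ≤ (d:ℝ) := cast_d_ge hd
  have hx0 : 0 < x := lt_of_lt_of_le hy0 hyx
  have h1 : y ^ d ≤ x ^ d := pow_le_pow_left₀ hy0.le hyx d
  have h2 : x ^ d ≤ x ^ (d-1) := pow_le_pow_of_le_one hx0.le hx1 (by omega)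
  have h4 : (0:ℝ) < x ^ (d-1) := pow_pos hx0 _
  nlinarith [mul_le_mul_of_nonneg_left (h1.trans h2) (by linarith : (0:ℝ) ≤ (d:ℝ)-1)]
lemma step_lt (hd : 3 ≤ d) {y x : ℝ} (hy0 : 0 < y) (hyx : y ≤ x) (hx1 : x ≤ 1) :
    f d y x < x := by
  have hE := denom_neg hd hy0 hyx hx1
  have h3 : (3:ℝ) ≤ (d:ℝ) := cast_d_ge hd
  have hx0 : 0 < x := lt_of_lt_of_le hy0 hyx
  have hpd : x ^ d = x ^ (d-1) * x := pow_d_eq hd x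
  have hyd : (0:ℝ) < y ^ d := pow_pos hy0 d
  have hxd : (0:ℝ) < x ^ d := pow_pos hx0 d
  unfold f
  rw [div_lt_iff_of_neg hE]
  nlinarith [mul_nonneg (mul_nonneg (by linarith : (0:ℝ) ≤ (d:ℝ)-1) hyd.le)
    (by linarith : (0:ℝ) ≤ 1 - x)]
lemma chain (hd : 3 ≤ d) {y : ℝ} (hy0 : 0 < y) (hy1 : y ≤ 1) (M : ℕ)
    (H : ∀ i, 1 ≤ i → i ≤ M → y ≤ Q d i y) :
    ∀ i, 1 ≤ i → i ≤ M + 1 → Q d i y ≤ 1 := by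
  intro i
  induction i with
  | zero => exact fun h _ => absurd h (by omega)
  | succ j ih =>
    intro _ hle
    rcases Nat.eq_zero_or_pos j with hj | hj
    · subst hj; rw [Qone]
    · have hQj : Q d j y ≤ 1 := ih hj (by omega)
      have hyQ : y ≤ Q d j y := H j hj (by omega)
      obtain ⟨j', rfl⟩ : ∃ j', j = j' + 1 := ⟨j-1, by omega⟩
      rw [Qsucc]
      exact ((step_lt hd hy0 hyQ hQj).le).trans hQj
lemma chain_dec (hd : 3 ≤ d) {y : ℝ} (hy0 : 0 < y) (hy1 : y ≤ 1) (M : ℕ)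
    (H : ∀ i, 1 ≤ i → i ≤ M → y ≤ Q d i y) :
    ∀ i, 1 ≤ i → i ≤ M → Q d (i+1) y < Q d i y := by
  intro i hi1 hiM
  have hQ1 : Q d i y ≤ 1 := chain hd hy0 hy1 M H i hi1 (by omega)
  have hyQ : y ≤ Q d i y := H i hi1 hiM
  obtain ⟨j, rfl⟩ : ∃ j, i = j + 1 := ⟨i-1, by omega⟩
  rw [Qsucc]
  exact step_lt hd hy0 hyQ hQ1
lemma contQ (k : ℕ) (S : Set ℝ)
    (hden : ∀ j, 1 ≤ j → j ≤ k → ∀ y ∈ S,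
      ((d:ℝ) - 1) * y ^ d - (d:ℝ) * (Q d j y) ^ (d-1) ≠ 0) :
    ContinuousOn (Q d (k+1)) S := by
  induction k with
  | zero => rw [Qone_fun]; exact continuousOn_const
  | succ k ih =>
    have ihc : ContinuousOn (Q d (k+1)) S := ih (fun j h1 h2 => hden j h1 (by omega))
    have hnum : ContinuousOn
        (fun y : ℝ => ((d:ℝ)-1) * y^d - ((d:ℝ)-1) * (Q d (k+1) y)^d) S :=
      (continuousOn_const.mul (continuousOn_pow d)).sub
        (continuousOn_const.mul (ihc.pow d))
    have hdenc : ContinuousOn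
        (fun y : ℝ => ((d:ℝ)-1) * y^d - (d:ℝ) * (Q d (k+1) y)^(d-1)) S :=
      (continuousOn_const.mul (continuousOn_pow d)).sub
        (continuousOn_const.mul (ihc.pow (d-1)))
    have h := hnum.div hdenc (fun y hy => hden (k+1) (by omega) (by omega) y hy)
    exact h.congr (fun y hy => rfl)
lemma contQat (k : ℕ) (x : ℝ)
    (hden : ∀ j, 1 ≤ j → j ≤ k →
      ((d:ℝ) - 1) * x ^ d - (d:ℝ) * (Q d j x) ^ (d-1) ≠ 0) :
    ContinuousAt (Q d (k+1)) x := by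
  induction k with
  | zero => rw [Qone_fun]; exact continuousAt_const
  | succ k ih =>
    have ihc : ContinuousAt (Q d (k+1)) x := ih (fun j h1 h2 => hden j h1 (by omega))
    have hnum : ContinuousAt
        (fun y : ℝ => ((d:ℝ)-1) * y^d - ((d:ℝ)-1) * (Q d (k+1) y)^d) x :=
      (continuousAt_const.mul ((continuous_pow d).continuousAt)).sub
        (continuousAt_const.mul (ihc.pow d))
    have hdenc : ContinuousAt
        (fun y : ℝ => ((d:ℝ)-1) * y^d - (d:ℝ) * (Q d (k+1) y)^(d-1)) x :=
      (continuousAt_const.mul ((continuous_pow d).continuousAt)).sub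
        (continuousAt_const.mul (ihc.pow (d-1)))
    have h := hnum.div hdenc (hden (k+1) (by omega) (by omega))
    have hfun : Q d (k+2) = fun y : ℝ =>
        (((d:ℝ)-1) * y^d - ((d:ℝ)-1) * (Q d (k+1) y)^d) /
        (((d:ℝ)-1) * y^d - (d:ℝ) * (Q d (k+1) y)^(d-1)) := by
      funext y; rfl
    rw [hfun]; exact h
lemma Qzero_pos (hd : 3 ≤ d) : ∀ k, 0 < Q d (k+1) 0 := by
  intro k
  induction k with
  | zero => rw [Qone]; norm_num
  | succ k ih =>
    have h3 : (3:ℝ) ≤ (d:ℝ) := cast_d_ge hd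
    have h0d : (0:ℝ)^d = 0 := zero_pow (by omega)
    have hnum : ((d:ℝ)-1)*(0:ℝ)^d - ((d:ℝ)-1)*(Q d (k+1) 0)^d < 0 := by
      rw [h0d]; have := pow_pos ih d; nlinarith
    have hdenc : ((d:ℝ)-1)*(0:ℝ)^d - (d:ℝ)*(Q d (k+1) 0)^(d-1) < 0 := by
      rw [h0d]; have := pow_pos ih (d-1); nlinarith
    rw [Qstep]
    exact div_pos_of_neg_of_neg hnum hdenc
lemma denom_zero (hd : 3 ≤ d) (j : ℕ) (hj : 1 ≤ j) :
    ((d:ℝ) - 1) * (0:ℝ) ^ d - (d:ℝ) * (Q d j 0) ^ (d-1) ≠ 0 := by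
  obtain ⟨k, rfl⟩ : ∃ k, j = k + 1 := ⟨j-1, by omega⟩
  have h3 : (3:ℝ) ≤ (d:ℝ) := cast_d_ge hd
  have h0d : (0:ℝ)^d = 0 := zero_pow (by omega)
  have := pow_pos (Qzero_pos hd k) (d-1)
  rw [h0d]
  nlinarith
lemma f_self (d : ℕ) (t : ℝ) : f d t t = 0 := by
  unfold f
  rw [sub_self, zero_div]
end NCA


/-- Fix integers `d ≥ 3` and `n ≥ 3`, let `c` be the least positive real with
`Q_{n−1}(c) = c`, and define `z_i = f_c^(i−1)(0)` for `1 ≤ i ≤ n`.  Then the cycle is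
strictly decreasing from `z_2` to `z_n` and stays in `(0,1)`:
`0 = z_1 < z_n < z_{n−1} < ⋯ < z_3 < z_2 = 1`, i.e. `z_{i+1} < z_i` for all
`2 ≤ i ≤ n−1` and `0 < z_n`. -/
theorem newton_cycle_strictly_decreasing
    (d n : ℕ) (hd : 3 ≤ d) (hn : 3 ≤ n)
    (c : ℝ) (hc : IsLeast {y : ℝ | 0 < y ∧ Q d (n - 1) y = y} c) :
    (let z : ℕ → ℝ := fun i => (f d c)^[i - 1] 0
     z 1 = 0 ∧ z 2 = 1 ∧ 0 < z n ∧
     ∀ i : ℕ, 2 ≤ i → i ≤ n - 1 → z (i + 1) < z i) := by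
  obtain ⟨n₀, rfl⟩ : ∃ n₀, n = n₀ + 3 := ⟨n - 3, by omega⟩
  obtain ⟨⟨hc0, hcfix⟩, hclb⟩ := hc
  have hcfix' : Q d (n₀+2) c = c := hcfix
  have h3 : (3:ℝ) ≤ (d:ℝ) := NCA.cast_d_ge hd
  -- eventually near 0
  have h0ev : ∀ᶠ y in 𝓝 (0:ℝ), ∀ j ∈ Finset.Icc 1 (n₀+2), y < Q d j y := by
    rw [Filter.eventually_all_finset]
    intro j hj
    simp only [Finset.mem_Icc] at hj
    obtain ⟨k, rfl⟩ : ∃ k, j = k + 1 := ⟨j-1, by omega⟩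
    have hca : ContinuousAt (fun y => Q d (k+1) y - y) 0 :=
      (NCA.contQat k 0 (fun i h1 _ => NCA.denom_zero hd i h1)).sub continuousAt_id
    have hpos : (0:ℝ) < Q d (k+1) 0 - 0 := by simpa using NCA.Qzero_pos hd k
    filter_upwards [hca.eventually (eventually_gt_nhds hpos)] with y hy
    linarith [hy]
  obtain ⟨ε, hε, hball⟩ := Metric.eventually_nhds_iff.mp h0ev
  have hball' : ∀ y : ℝ, 0 < y → y < ε → ∀ j, 1 ≤ j → j ≤ n₀+2 → y < Q d j y := by
    intro y hy0 hyε j h1 h2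
    have hd0 : dist y (0:ℝ) < ε := by
      rw [Real.dist_eq, sub_zero, abs_of_pos hy0]; exact hyε
    exact hball hd0 j (Finset.mem_Icc.mpr ⟨h1, h2⟩)
  -- the set F and t
  set F : Set ℝ := {y | 0 < y ∧ y ≤ 1 ∧ ∃ j, 1 ≤ j ∧ j ≤ n₀+1 ∧ Q d j y ≤ y} with hF
  have hF1 : (1:ℝ) ∈ F := ⟨one_pos, le_rfl, 1, le_rfl, by omega, by rw [NCA.Qone]⟩
  have hFlb : ∀ y ∈ F, ε ≤ y := by
    rintro y ⟨hy0, hy1, j, hj1, hj2, hjle⟩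
    by_contra hlt
    push_neg at hlt
    exact absurd hjle (not_le.mpr (hball' y hy0 hlt j hj1 (by omega)))
  have hFbdd : BddBelow F := ⟨ε, hFlb⟩
  set t := sInf F with ht
  have htpos : 0 < t := lt_of_lt_of_le hε (le_csInf ⟨1, hF1⟩ hFlb)
  have ht1 : t ≤ 1 := csInf_le hFbdd hF1
  have hPt : ∀ y : ℝ, 0 < y → y < t → ∀ j, 1 ≤ j → j ≤ n₀+1 → y < Q d j y := by
    intro y hy0 hyt j hj1 hj2
    by_contra hle
    push_neg at hle
    have hyF : y ∈ F := ⟨hy0, le_trans hyt.le ht1, j, hj1, hj2, hle⟩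
    exact absurd (csInf_le hFbdd hyF) (not_le.mpr hyt)
  have hden_of : ∀ (jm : ℕ) (y : ℝ), 0 < y → y ≤ 1 →
      (∀ i, 1 ≤ i → i ≤ jm → y ≤ Q d i y) →
      ∀ i, 1 ≤ i → i ≤ jm →
        ((d:ℝ)-1) * y^d - (d:ℝ) * (Q d i y)^(d-1) ≠ 0 := by
    intro jm y hy0 hy1 H i h1 h2
    exact (NCA.denom_neg hd hy0 (H i h1 h2)
      (NCA.chain hd hy0 hy1 jm H i h1 (by omega))).ne
  -- key induction
  have key : ∀ j, j ≤ n₀+1 →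
      (∀ i, 1 ≤ i → i ≤ j → t ≤ Q d i t) ∧ ContinuousOn (Q d (j+1)) (Set.Ioc 0 t) := by
    intro j
    induction j with
    | zero =>
      intro _
      refine ⟨fun i h1 h2 => absurd (by omega : i = 0) (by omega), ?_⟩
      rw [NCA.Qone_fun]; exact continuousOn_const
    | succ j ih =>
      intro hjM
      obtain ⟨Hj, hcontj⟩ := ih (by omega)
      have hQt : t ≤ Q d (j+1) t := by
        have hmem : t ∈ Set.Ioc 0 t := ⟨htpos, le_refl t⟩
        have hcw : ContinuousWithinAt (Q d (j+1)) (Set.Ioc 0 t) t := hcontj t hmem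
        have hne : (𝓝[Set.Ioo 0 t] t).NeBot := by
          rw [← mem_closure_iff_nhdsWithin_neBot, closure_Ioo htpos.ne]
          exact ⟨htpos.le, le_rfl⟩
        have htend : Filter.Tendsto (Q d (j+1)) (𝓝[Set.Ioo 0 t] t) (𝓝 (Q d (j+1) t)) :=
          hcw.mono Set.Ioo_subset_Ioc_self
        have hid : Filter.Tendsto (fun y : ℝ => y) (𝓝[Set.Ioo 0 t] t) (𝓝 t) :=
          tendsto_id.mono_left nhdsWithin_le_nhds
        refine le_of_tendsto_of_tendsto hid htend ?_
        filter_upwards [self_mem_nhdsWithin] with y hy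
        exact (hPt y hy.1 hy.2 (j+1) (by omega) (by omega)).le
      have Hj1 : ∀ i, 1 ≤ i → i ≤ j+1 → t ≤ Q d i t := by
        intro i h1 h2
        rcases Nat.lt_or_ge i (j+1) with h | h
        · exact Hj i h1 (by omega)
        · have hi : i = j+1 := by omega
          rw [hi]; exact hQt
      refine ⟨Hj1, ?_⟩
      refine NCA.contQ (j+1) _ ?_
      intro i h1 h2 y hy
      rcases eq_or_lt_of_le hy.2 with heq | hlt
      · rw [heq]
        exact hden_of (j+1) t htpos ht1 Hj1 i h1 h2
      · exact hden_of (n₀+1) y hy.1 (by linarith)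
          (fun i' a b => (hPt y hy.1 hlt i' a b).le) i h1 (by omega)
  -- Q_{n₀+1}(t) = t
  have hQMt : Q d (n₀+1) t = t := by
    rcases eq_or_lt_of_le ht1 with h1 | hlt1
    · -- t = 1
      have hM1 : n₀ = 0 := by
        by_contra hne0
        have := (key (n₀+1) le_rfl).1 2 (by omega) (by omega)
        rw [h1] at this
        have hQ21 : Q d 2 1 = 0 := by
          rw [NCA.Qstep, NCA.Qone]
          norm_num
        rw [hQ21] at this
        norm_num at this
      subst hM1
      rw [NCA.Qone]
      exact h1.symm
    · -- t < 1
      have hex : ∃ j, 1 ≤ j ∧ j ≤ n₀+1 ∧ Q d j t ≤ t := by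
        by_contra hno
        push_neg at hno
        have hst : ∀ j, 1 ≤ j → j ≤ n₀+1 → t < Q d j t := hno
        have hev : ∀ᶠ y in 𝓝 t, ∀ j ∈ Finset.Icc 1 (n₀+1), y < Q d j y := by
          rw [Filter.eventually_all_finset]
          intro j hj
          simp only [Finset.mem_Icc] at hj
          obtain ⟨k, rfl⟩ : ∃ k, j = k + 1 := ⟨j-1, by omega⟩
          have hca : ContinuousAt (fun y => Q d (k+1) y - y) t :=
            (NCA.contQat k t (fun i ha hb =>
              hden_of (n₀+1) t htpos hlt1.le (fun i' a b => (hst i' a b).le)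
                i ha (by omega))).sub continuousAt_id
          have hpos : (0:ℝ) < Q d (k+1) t - t := sub_pos.mpr (hst (k+1) (by omega) hj.2)
          filter_upwards [hca.eventually (eventually_gt_nhds hpos)] with y hy
          linarith [hy]
        obtain ⟨δ, hδ, hballt⟩ := Metric.eventually_nhds_iff.mp hev
        obtain ⟨y, hyF, hylt⟩ := (csInf_lt_iff hFbdd ⟨1, hF1⟩).mp
          (show sInf F < t + δ by rw [← ht]; linarith)
        have hty : t ≤ y := csInf_le hFbdd hyF
        have hdist : dist y t < δ := by
          rw [Real.dist_eq, abs_of_nonneg (by linarith)]; linarith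
        obtain ⟨hy0, hy1, j, hj1, hj2, hjle⟩ := hyF
        exact absurd hjle (not_le.mpr (hballt hdist j (Finset.mem_Icc.mpr ⟨hj1, hj2⟩)))
      obtain ⟨j, hj1, hj2, hjle⟩ := hex
      have hjeq : Q d j t = t := le_antisymm hjle ((key (n₀+1) le_rfl).1 j hj1 hj2)
      rcases eq_or_lt_of_le hj2 with hjM | hjlt
      · rwa [hjM] at hjeq
      · exfalso
        have hj1t : Q d (j+1) t = 0 := by
          obtain ⟨j', rfl⟩ : ∃ j', j = j' + 1 := ⟨j-1, by omega⟩
          rw [NCA.Qsucc, hjeq, NCA.f_self]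
        have := (key (n₀+1) le_rfl).1 (j+1) (by omega) (by omega)
        rw [hj1t] at this
        linarith
  have hQM1t : Q d (n₀+2) t = 0 := by
    rw [NCA.Qsucc, hQMt, NCA.f_self]
  -- IVT
  have hcontM1 : ContinuousOn (Q d (n₀+2)) (Set.Ioc 0 t) := (key (n₀+1) le_rfl).2
  set a := min (ε/2) (t/2) with ha
  have ha0 : 0 < a := lt_min (by linarith) (by linarith)
  have hat : a < t := lt_of_le_of_lt (min_le_right _ _) (by linarith)
  have haε : a < ε := lt_of_le_of_lt (min_le_left _ _) (by linarith)
  have hga : a < Q d (n₀+2) a := hball' a ha0 haε (n₀+2) (by omega) le_rfl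
  have hsub : Set.Icc a t ⊆ Set.Ioc 0 t := fun y hy => ⟨lt_of_lt_of_le ha0 hy.1, hy.2⟩
  have hcont2 : ContinuousOn (fun y => Q d (n₀+2) y - y) (Set.Icc a t) :=
    (hcontM1.mono hsub).sub continuousOn_id
  have h0mem : (0:ℝ) ∈ Set.Icc (Q d (n₀+2) t - t) (Q d (n₀+2) a - a) := by
    constructor
    · rw [hQM1t]; linarith
    · linarith
  obtain ⟨y0, hy0mem, hy0eq⟩ := intermediate_value_Icc' hat.le hcont2 h0mem
  have hy0fix : Q d (n₀+2) y0 = y0 := by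
    have : Q d (n₀+2) y0 - y0 = 0 := hy0eq
    linarith
  have hy0t : y0 < t := by
    rcases eq_or_lt_of_le hy0mem.2 with h | h
    · exfalso
      rw [h, hQM1t] at hy0fix
      exact absurd hy0fix.symm htpos.ne'
    · exact h
  have hcy0 : c ≤ y0 := hclb ⟨lt_of_lt_of_le ha0 hy0mem.1, hy0fix⟩
  have hct : c < t := lt_of_le_of_lt hcy0 hy0t
  have hc1 : c ≤ 1 := le_trans hct.le ht1
  have Hc : ∀ i, 1 ≤ i → i ≤ n₀+1 → c ≤ Q d i c := fun i a' b => (hPt c hc0 hct i a' b).le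
  have hdec : ∀ i, 1 ≤ i → i ≤ n₀+1 → Q d (i+1) c < Q d i c :=
    NCA.chain_dec hd hc0 hc1 (n₀+1) Hc
  -- iterates
  have hne : ((d:ℝ)-1) * c^d ≠ 0 := ne_of_gt (mul_pos (by linarith) (pow_pos hc0 d))
  have hf0 : f d c 0 = 1 := by
    unfold f
    rw [zero_pow (by omega : d ≠ 0), zero_pow (by omega : d - 1 ≠ 0),
      mul_zero, mul_zero, sub_zero, div_self hne]
  have hiter : ∀ k, 1 ≤ k → (f d c)^[k] 0 = Q d k c := by
    intro k hk
    induction k with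
    | zero => omega
    | succ k ih =>
      rcases Nat.eq_zero_or_pos k with h | h
      · subst h
        rw [Function.iterate_one, hf0, NCA.Qone]
      · obtain ⟨j, rfl⟩ : ∃ j, k = j + 1 := ⟨k-1, by omega⟩
        rw [Function.iterate_succ_apply', ih (by omega)]
        exact (NCA.Qsucc d j c).symm
  refine ⟨rfl, ?_, ?_, ?_⟩
  · show (f d c)^[2-1] 0 = 1
    rw [show (2:ℕ) - 1 = 1 from rfl, Function.iterate_one, hf0]
  · show 0 < (f d c)^[n₀+3-1] 0
    rw [show n₀+3-1 = n₀+2 from rfl, hiter (n₀+2) (by omega), hcfix']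
    exact hc0
  · intro i h2 hiM
    obtain ⟨j, rfl⟩ : ∃ j, i = j + 2 := ⟨i-2, by omega⟩
    show (f d c)^[j+2+1-1] 0 < (f d c)^[j+2-1] 0
    rw [show j+2+1-1 = j+2 from rfl, show j+2-1 = j+1 from rfl,
      hiter (j+2) (by omega), hiter (j+1) (by omega)]
    exact hdec (j+1) (by omega) (by omega)
end

section
/- Fix an integer d ≥ 3. For each n ≥ 2 let c_n be the least positive real number with Q_{n−1}(c_n) = c_n, and for k ≥ 1 and n ≥ 2 set z_{k,n} = f_{c_n}^{k−1}(0). Then for every k ≥ 3 and all integers i, j with k ≤ i < j one has 0 < c_k = z_{k,k}, z_{k,i} < z_{k,j}, and z_{k,j} < 1; that is, for fixed k ≥ 3 the sequence n ↦ z_{k,n} (n ≥ k) is strictly increasing and bounded above by 1. -/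
/-!
For `0 < y ≤ 1` the map `f d y` is increasing on `[y, 1]`, lies below the diagonal there, and
decreases strictly as the parameter `y` grows. So while the orbit of `0` under `f d y` stays in
`[y, 1]`, a smaller parameter gives a pointwise larger orbit, strictly so from the second iterate on.

By induction on `n`, the orbit of `c n` stays in `[c n, 1]` until it returns to `c n` at time
`n - 1`. Comparing with these orbits, every `y ≤ c n` has its first `n - 1` iterates in `[c n, 1]`;
then `y ↦ f_y^n(0) - y` is continuous on `[c n / 4, c n]`, negative at `c n` and positive at
`c n / 4`, so `Q_n` has a fixed point below `c n` and `c (n + 1) < c n`. Comparing the orbits of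
`c i` and `c j` gives the theorem.
-/

open Set

section
variable {d : ℕ}

theorem f_eq_div (y x : ℝ) :
    f d y x = ((d - 1) * (x ^ d - y ^ d)) / (d * x ^ (d - 1) - (d - 1) * y ^ d) := by
  rw [f, ← neg_div_neg_eq]
  ring_nf

theorem f_self (y : ℝ) : f d y y = 0 := by
  rw [f, sub_self, zero_div]

theorem f_zero (hd : 2 ≤ d) {y : ℝ} (hy : y ≠ 0) : f d y 0 = 1 := by
  have hd1 : (1 : ℝ) < d := by exact_mod_cast hd
  have : ((d : ℝ) - 1) * y ^ d ≠ 0 := mul_ne_zero (by linarith) (pow_ne_zero _ hy)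
  simp [f, zero_pow (by omega : d ≠ 0), zero_pow (by omega : d - 1 ≠ 0), this]

theorem f_denom_pos (hd : 1 ≤ d) {y x : ℝ} (hy : 0 < y) (hy1 : y ≤ 1) (hyx : y ≤ x) :
    0 < d * x ^ (d - 1) - (d - 1) * y ^ d := by
  have hd1 : (0 : ℝ) ≤ d - 1 := by rw [sub_nonneg]; exact_mod_cast hd
  rw [sub_pos]
  calc ((d : ℝ) - 1) * y ^ d ≤ (d - 1) * x ^ (d - 1) := by
        gcongr
        exact (pow_le_pow_of_le_one hy.le hy1 (Nat.sub_le d 1)).trans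
          (pow_le_pow_left₀ hy.le hyx _)
    _ < d * x ^ (d - 1) := by nlinarith [pow_pos (hy.trans_le hyx) (d - 1)]

theorem f_lt_self (hd : 1 ≤ d) {y x : ℝ} (hy : 0 < y) (hyx : y ≤ x) (hx1 : x ≤ 1) :
    f d y x < x := by
  have hD := f_denom_pos hd hy (hyx.trans hx1) hyx
  have hd1 : (0 : ℝ) ≤ d - 1 := by rw [sub_nonneg]; exact_mod_cast hd
  have hxd : x ^ d = x ^ (d - 1) * x := by rw [← pow_succ, Nat.sub_add_cancel hd]
  rw [f_eq_div, div_lt_iff₀ hD]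
  -- `x` times the denominator minus the numerator is `x ^ d + (d - 1) * y ^ d * (1 - x) > 0`
  nlinarith [pow_pos (hy.trans_le hyx) d, mul_nonneg (mul_nonneg hd1 (pow_pos hy d).le)
    (sub_nonneg.2 hx1)]

theorem monotoneOn_mul_pow_pred_sub_mul_pow (hd : 1 ≤ d) :
    MonotoneOn (fun s : ℝ => d * s ^ (d - 1) - (d - 1) * s ^ d) (Icc 0 1) := by
  refine monotoneOn_of_deriv_nonneg (convex_Icc 0 1) (by fun_prop) (by fun_prop) fun s hs => ?_
  rw [interior_Icc] at hs
  have hcast : ((d - 1 : ℕ) : ℝ) = d - 1 := by push_cast [hd]; ring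
  have hd1 : (0 : ℝ) ≤ d - 1 := by rw [sub_nonneg]; exact_mod_cast hd
  have hpow : s ^ (d - 1) ≤ s ^ (d - 1 - 1) :=
    pow_le_pow_of_le_one hs.1.le hs.2.le (Nat.sub_le _ 1)
  rw [deriv_fun_sub (by fun_prop) (by fun_prop), deriv_const_mul _ (by fun_prop),
    deriv_const_mul _ (by fun_prop), deriv_pow_field, deriv_pow_field, hcast]
  nlinarith [mul_le_mul_of_nonneg_left hpow (mul_nonneg (Nat.cast_nonneg d) hd1)]

theorem f_monotoneOn (hd : 1 ≤ d) {y : ℝ} (hy : 0 < y) (hy1 : y ≤ 1) :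
    MonotoneOn (f d y) (Icc y 1) := by
  intro x₁ hx₁ x₂ hx₂ h₁₂
  have hD₁ := f_denom_pos hd hy hy1 hx₁.1
  have hD₂ := f_denom_pos hd hy hy1 hx₂.1
  have hH := monotoneOn_mul_pow_pred_sub_mul_pow hd ⟨hy.le.trans hx₁.1, hx₁.2⟩
    ⟨hy.le.trans hx₂.1, hx₂.2⟩ h₁₂
  have hd1 : (0 : ℝ) ≤ d - 1 := by rw [sub_nonneg]; exact_mod_cast hd
  have key : (d - 1) * (x₂ ^ d - y ^ d) * (d * x₁ ^ (d - 1) - (d - 1) * y ^ d) -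
      (d - 1) * (x₁ ^ d - y ^ d) * (d * x₂ ^ (d - 1) - (d - 1) * y ^ d) =
      ((d : ℝ) - 1) * (y ^ d * ((d * x₂ ^ (d - 1) - (d - 1) * x₂ ^ d) -
        (d * x₁ ^ (d - 1) - (d - 1) * x₁ ^ d)) + d * x₁ ^ (d - 1) * x₂ ^ (d - 1) * (x₂ - x₁)) := by
    obtain ⟨e, rfl⟩ : ∃ e, d = e + 1 := ⟨d - 1, by omega⟩
    simp only [Nat.add_sub_cancel]
    push_cast
    ring
  rw [f_eq_div, f_eq_div, div_le_div_iff₀ hD₁ hD₂, ← sub_nonneg, key]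
  have hx₁0 : 0 < x₁ := hy.trans_le hx₁.1
  have hx₂0 : 0 < x₂ := hy.trans_le hx₂.1
  have hyH : 0 ≤ y ^ d * ((d * x₂ ^ (d - 1) - (d - 1) * x₂ ^ d) -
      (d * x₁ ^ (d - 1) - (d - 1) * x₁ ^ d)) := mul_nonneg (by positivity) (sub_nonneg.2 hH)
  have h₂₁ : 0 ≤ x₂ - x₁ := sub_nonneg.2 h₁₂
  exact mul_nonneg hd1 (add_nonneg hyH (mul_nonneg (by positivity) h₂₁))

theorem strictAntiOn_f_param (hd : 2 ≤ d) {x : ℝ} (hx1 : x ≤ 1) :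
    StrictAntiOn (fun y => f d y x) (Ioc 0 x) := by
  intro y₁ hy₁ y₂ hy₂ h₁₂
  have hD₁ := f_denom_pos (by omega : 1 ≤ d) hy₁.1 (hy₁.2.trans hx1) hy₁.2
  have hD₂ := f_denom_pos (by omega : 1 ≤ d) hy₂.1 (hy₂.2.trans hx1) hy₂.2
  have hd1 : (0 : ℝ) < d - 1 := by
    rw [sub_pos]; exact_mod_cast (by omega : 1 < d)
  have key : (d - 1) * (x ^ d - y₁ ^ d) * (d * x ^ (d - 1) - (d - 1) * y₂ ^ d) -
      (d - 1) * (x ^ d - y₂ ^ d) * (d * x ^ (d - 1) - (d - 1) * y₁ ^ d) =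
      ((d : ℝ) - 1) * (y₂ ^ d - y₁ ^ d) * (x ^ (d - 1) * (d - (d - 1) * x)) := by
    obtain ⟨e, rfl⟩ : ∃ e, d = e + 1 := ⟨d - 1, by omega⟩
    simp only [Nat.add_sub_cancel]
    push_cast
    ring
  show f d y₂ x < f d y₁ x
  rw [f_eq_div, f_eq_div, div_lt_div_iff₀ hD₂ hD₁, ← sub_pos, key]
  have : 0 < y₂ ^ d - y₁ ^ d := sub_pos.2 (pow_lt_pow_left₀ h₁₂ hy₁.1.le (by omega))
  have : 0 < (d : ℝ) - (d - 1) * x := by nlinarith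
  have := pow_pos (hy₁.1.trans_le hy₁.2) (d - 1)
  positivity

theorem half_sub_le_f (hd : 2 ≤ d) {a x : ℝ} (ha : 0 < a) (hax : a ≤ x) (hx1 : x ≤ 1) :
    (x - a) / 2 ≤ f d a x := by
  have hD := f_denom_pos (by omega : 1 ≤ d) ha (hax.trans hx1) hax
  have hd2 : (2 : ℝ) ≤ d := by exact_mod_cast hd
  have hxd : x ^ d = x ^ (d - 1) * x := by rw [← pow_succ, Nat.sub_add_cancel (by omega)]
  have had : a ^ d = a ^ (d - 1) * a := by rw [← pow_succ, Nat.sub_add_cancel (by omega)]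
  have hpow : a ^ (d - 1) ≤ x ^ (d - 1) := pow_le_pow_left₀ ha.le hax _
  have hX := pow_pos (ha.trans_le hax) (d - 1)
  rw [f_eq_div, le_div_iff₀ hD]
  calc (x - a) / 2 * (d * x ^ (d - 1) - (d - 1) * a ^ d)
      ≤ (x - a) / 2 * (d * x ^ (d - 1)) :=
        mul_le_mul_of_nonneg_left (by nlinarith [pow_pos ha d]) (by linarith)
    _ ≤ (d - 1) * (x ^ (d - 1) * (x - a)) := by nlinarith [mul_nonneg (sub_nonneg.2 hax) hX.le]
    _ ≤ (d - 1) * (x ^ d - a ^ d) := by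
        rw [hxd, had]
        gcongr
        · linarith
        · nlinarith

noncomputable def orbit (d : ℕ) (y : ℝ) (m : ℕ) : ℝ := (f d y)^[m] 0

theorem orbit_zero (y : ℝ) : orbit d y 0 = 0 := rfl

theorem orbit_succ (y : ℝ) (m : ℕ) : orbit d y (m + 1) = f d y (orbit d y m) :=
  Function.iterate_succ_apply' _ _ _

theorem orbit_one (hd : 2 ≤ d) {y : ℝ} (hy : y ≠ 0) : orbit d y 1 = 1 := by
  rw [orbit_succ, orbit_zero, f_zero hd hy]

theorem Q_eq_orbit (hd : 2 ≤ d) {y : ℝ} (hy : y ≠ 0) (m : ℕ) : Q d m y = orbit d y m := by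
  induction m using Nat.twoStepInduction with
  | zero => rfl
  | one => rw [Q, orbit_one hd hy]
  | more k _ ih => rw [orbit_succ, Q, ih, f]

/-- `[y, 1]` is the region where `f d y` is increasing and below the diagonal; the iterate
`m = 0`, which is `0`, is excluded. -/
def OrbitInIcc (d : ℕ) (y : ℝ) (n : ℕ) : Prop :=
  ∀ m, 1 ≤ m → m < n → orbit d y m ∈ Icc y 1

theorem continuousAt_orbit {y₀ : ℝ} {N : ℕ}
    (h : ∀ t < N, ((d : ℝ) - 1) * y₀ ^ d - d * orbit d y₀ t ^ (d - 1) ≠ 0) :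
    ContinuousAt (fun y => orbit d y N) y₀ := by
  induction N with
  | zero => exact continuousAt_const
  | succ N ih =>
    have hN := ih fun t ht => h t (by omega)
    simp only [orbit_succ, f]
    exact ContinuousAt.div (by fun_prop) (by fun_prop) (h N (by omega))

theorem continuousOn_orbit (hd : 2 ≤ d) {s : Set ℝ} (hs : s ⊆ Ioc 0 1) {N : ℕ}
    (h : ∀ y ∈ s, OrbitInIcc d y N) : ContinuousOn (fun y => orbit d y N) s := by
  refine continuousOn_of_forall_continuousAt fun y hy => continuousAt_orbit fun t ht => ?_
  obtain ⟨hy0, hy1⟩ := hs hy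
  rcases Nat.eq_zero_or_pos t with rfl | ht0
  · have hd1 : (1 : ℝ) < d := by exact_mod_cast hd
    rw [orbit_zero, zero_pow (by omega), mul_zero, sub_zero]
    exact (mul_pos (by linarith) (pow_pos hy0 d)).ne'
  · have := f_denom_pos (by omega : 1 ≤ d) hy0 hy1 (h y hy t ht0 ht).1
    linarith

theorem orbit_le_orbit_of_le (hd : 2 ≤ d) {y' y : ℝ} (hy' : 0 < y') (hy'y : y' ≤ y) {n : ℕ}
    (h : OrbitInIcc d y n) {t : ℕ} (ht1 : 1 ≤ t) (htn : t ≤ n) :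
    orbit d y t ≤ orbit d y' t ∧ orbit d y' t ≤ 1 := by
  induction t, ht1 using Nat.le_induction with
  | base => simp [orbit_one hd (hy'.trans_le hy'y).ne', orbit_one hd hy'.ne']
  | succ t ht1 ih =>
    obtain ⟨hyt, hyt1⟩ := h t ht1 htn
    obtain ⟨hle, hle1⟩ := ih (by omega)
    have hy't : y' ≤ orbit d y t := hy'y.trans hyt
    refine ⟨?_, ?_⟩
    · rw [orbit_succ, orbit_succ]
      calc f d y (orbit d y t) ≤ f d y' (orbit d y t) :=
            (strictAntiOn_f_param hd hyt1).antitoneOn ⟨hy', hy't⟩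
              ⟨hy'.trans_le hy'y, hyt⟩ hy'y
        _ ≤ f d y' (orbit d y' t) :=
            f_monotoneOn (by omega) hy' (hy't.trans hyt1) ⟨hy't, hyt1⟩
              ⟨hy't.trans hle, hle1⟩ hle
    · rw [orbit_succ]
      exact (f_lt_self (by omega) hy' (hy't.trans hle) hle1).le.trans hle1

theorem orbit_lt_orbit_of_lt (hd : 2 ≤ d) {y' y : ℝ} (hy' : 0 < y') (hy'y : y' < y) {n : ℕ}
    (h : OrbitInIcc d y n) {t : ℕ} (ht2 : 2 ≤ t) (htn : t ≤ n) :
    orbit d y t < orbit d y' t := by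
  obtain ⟨s, rfl⟩ : ∃ s, t = s + 1 := ⟨t - 1, by omega⟩
  obtain ⟨hys, hys1⟩ := h s (by omega) (by omega)
  obtain ⟨hle, hle1⟩ := orbit_le_orbit_of_le hd hy' hy'y.le h (by omega : 1 ≤ s) (by omega)
  have hy's : y' ≤ orbit d y s := hy'y.le.trans hys
  rw [orbit_succ, orbit_succ]
  calc f d y (orbit d y s) < f d y' (orbit d y s) :=
        strictAntiOn_f_param hd hys1 ⟨hy', hy's⟩ ⟨hy'.trans hy'y, hys⟩ hy'y
    _ ≤ f d y' (orbit d y' s) :=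
        f_monotoneOn (by omega) hy' (hy's.trans hys1) ⟨hy's, hys1⟩ ⟨hy's.trans hle, hle1⟩ hle

theorem orbit_lt_one (hd : 1 ≤ d) {y : ℝ} (hy : 0 < y) {n : ℕ} (h : OrbitInIcc d y n) {t : ℕ}
    (ht2 : 2 ≤ t) (htn : t ≤ n) : orbit d y t < 1 := by
  obtain ⟨s, rfl⟩ : ∃ s, t = s + 1 := ⟨t - 1, by omega⟩
  obtain ⟨hys, hys1⟩ := h s (by omega) (by omega)
  rw [orbit_succ]
  exact (f_lt_self hd hy hys hys1).trans_le hys1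

theorem exists_orbit_succ_eq_self_lt (hd : 2 ≤ d) {b : ℝ} (hb : 0 < b) (hb1 : b ≤ 1) {n : ℕ}
    (hn : 1 ≤ n) (hfix : orbit d b n = b)
    (htrap : ∀ y ∈ Ioc 0 b, ∀ m, 1 ≤ m → m ≤ n → orbit d y m ∈ Icc b 1) :
    ∃ y ∈ Ioo 0 b, orbit d y (n + 1) = y := by
  have hsub : Icc (b / 4) b ⊆ Ioc 0 b := Icc_subset_Ioc (by linarith) le_rfl
  have hcont : ContinuousOn (fun y => orbit d y (n + 1) - y) (Icc (b / 4) b) := by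
    refine (continuousOn_orbit hd (hsub.trans (Ioc_subset_Ioc_right hb1)) fun y hy m hm1 hmn =>
      ?_).sub continuousOn_id
    obtain ⟨hbm, hm1'⟩ := htrap y (hsub hy) m hm1 (by omega)
    exact ⟨hy.2.trans hbm, hm1'⟩
  have hright : orbit d b (n + 1) - b = -b := by rw [orbit_succ, hfix, f_self, zero_sub]
  have hleft : b / 8 ≤ orbit d (b / 4) (n + 1) - b / 4 := by
    obtain ⟨hbx, hx1⟩ := htrap (b / 4) (hsub ⟨le_rfl, by linarith⟩) n hn le_rfl
    have := half_sub_le_f hd (by positivity) (by linarith : b / 4 ≤ orbit d (b / 4) n) hx1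
    rw [orbit_succ]
    linarith
  obtain ⟨y, hy, hy0⟩ := intermediate_value_Icc' (by linarith : b / 4 ≤ b) hcont
    (show (0 : ℝ) ∈ Icc _ _ from ⟨by linarith, by linarith⟩)
  have hyb : y ≠ b := by
    rintro rfl
    linarith
  exact ⟨y, ⟨by linarith [hy.1], lt_of_le_of_ne hy.2 hyb⟩, sub_eq_zero.1 hy0⟩

end

def IsLeastFixedPointSeq (d : ℕ) (c : ℕ → ℝ) : Prop :=
  ∀ n, 2 ≤ n → IsLeast {y : ℝ | 0 < y ∧ Q d (n - 1) y = y} (c n)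

namespace IsLeastFixedPointSeq

variable {d : ℕ} {c : ℕ → ℝ}

theorem pos (hc : IsLeastFixedPointSeq d c) {n : ℕ} (hn : 2 ≤ n) : 0 < c n := (hc n hn).1.1

theorem orbit_eq_self (hd : 2 ≤ d) (hc : IsLeastFixedPointSeq d c) {n : ℕ} (hn : 2 ≤ n) :
    orbit d (c n) (n - 1) = c n := by
  rw [← Q_eq_orbit hd (hc.pos hn).ne']
  exact (hc n hn).1.2

theorem two_eq_one (hc : IsLeastFixedPointSeq d c) : c 2 = 1 :=
  (hc 2 le_rfl).1.2.symm

/-- Comparison with the orbit of `c (m + 1)`, which returns to `c (m + 1)` at time `m`. -/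
theorem orbit_mem_Icc_of_le (hd : 2 ≤ d) (hc : IsLeastFixedPointSeq d c) {n : ℕ}
    (hprev : ∀ m, 2 ≤ m → m ≤ n → OrbitInIcc d (c m) m ∧ c n ≤ c m)
    (y : ℝ) (hy : y ∈ Ioc 0 (c n)) (m : ℕ) (hm1 : 1 ≤ m) (hmn : m < n) :
    orbit d y m ∈ Icc (c n) 1 := by
  obtain ⟨htrap, hle⟩ := hprev (m + 1) (by omega) (by omega)
  have hfix := hc.orbit_eq_self hd (by omega : 2 ≤ m + 1)
  rw [Nat.add_sub_cancel] at hfix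
  obtain ⟨hcmp, hy1⟩ := orbit_le_orbit_of_le hd hy.1 (hy.2.trans hle) htrap hm1 (by omega)
  exact ⟨hle.trans (hfix ▸ hcmp), hy1⟩

theorem succ_lt_and_orbitInIcc (hd : 2 ≤ d) (hc : IsLeastFixedPointSeq d c) {n : ℕ}
    (hn : 2 ≤ n) (hprev : ∀ m, 2 ≤ m → m ≤ n → OrbitInIcc d (c m) m ∧ c n ≤ c m) :
    c (n + 1) < c n ∧ OrbitInIcc d (c (n + 1)) (n + 1) := by
  have hcn1 : c n ≤ 1 := hc.two_eq_one ▸ (hprev 2 le_rfl hn).2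
  have htrap := hc.orbit_mem_Icc_of_le hd hprev
  obtain ⟨y, hy, hyfix⟩ := exists_orbit_succ_eq_self_lt hd (hc.pos hn) hcn1 (by omega : 1 ≤ n - 1)
    (hc.orbit_eq_self hd hn) fun y hy m hm1 hmn => htrap y hy m hm1 (by omega)
  rw [Nat.sub_add_cancel (by omega)] at hyfix
  have hlt : c (n + 1) < c n := by
    refine ((hc (n + 1) (by omega)).2 ⟨hy.1, ?_⟩).trans_lt hy.2
    rw [Nat.add_sub_cancel, Q_eq_orbit hd hy.1.ne', hyfix]
  refine ⟨hlt, fun m hm1 hm => ?_⟩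
  rcases (Nat.lt_succ_iff.1 hm).lt_or_eq with hm | rfl
  · obtain ⟨hle, hle1⟩ := htrap _ ⟨hc.pos (by omega), hlt.le⟩ m hm1 hm
    exact ⟨hlt.le.trans hle, hle1⟩
  · have hfix := hc.orbit_eq_self hd (by omega : 2 ≤ m + 1)
    rw [Nat.add_sub_cancel] at hfix
    rw [hfix]
    exact ⟨le_rfl, hlt.le.trans hcn1⟩

theorem orbitInIcc_and_le (hd : 2 ≤ d) (hc : IsLeastFixedPointSeq d c) {n : ℕ} (hn : 2 ≤ n) :
    ∀ m, 2 ≤ m → m ≤ n → OrbitInIcc d (c m) m ∧ c n ≤ c m := by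
  induction n, hn using Nat.le_induction with
  | base =>
    intro m hm2 hm
    obtain rfl : m = 2 := by omega
    refine ⟨fun t ht1 ht2 => ?_, le_rfl⟩
    obtain rfl : t = 1 := by omega
    rw [orbit_one hd (hc.pos le_rfl).ne', hc.two_eq_one]
    exact ⟨le_rfl, le_rfl⟩
  | succ n hn ih =>
    obtain ⟨hlt, htrap⟩ := hc.succ_lt_and_orbitInIcc hd hn ih
    intro m hm2 hm
    rcases hm.lt_or_eq with hm | rfl
    · obtain ⟨hmtrap, hle⟩ := ih m hm2 (by omega)
      exact ⟨hmtrap, hlt.le.trans hle⟩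
    · exact ⟨htrap, le_rfl⟩

theorem orbitInIcc (hd : 2 ≤ d) (hc : IsLeastFixedPointSeq d c) {n : ℕ} (hn : 2 ≤ n) :
    OrbitInIcc d (c n) n :=
  (hc.orbitInIcc_and_le hd hn n hn le_rfl).1

theorem strictAntiOn (hd : 2 ≤ d) (hc : IsLeastFixedPointSeq d c) : StrictAntiOn c (Ici 2) :=
  fun i hi j hj hij =>
    ((hc.orbitInIcc_and_le hd hj (i + 1) (by simp at hi; omega) hij).2).trans_lt
      (hc.succ_lt_and_orbitInIcc hd hi (hc.orbitInIcc_and_le hd hi)).1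

end IsLeastFixedPointSeq

/-- Fix `d ≥ 3`.  For each `n ≥ 2` let `c n` be the least positive real with
`Q_{n−1}(c n) = c n`, and for `k ≥ 1`, `n ≥ 2` set `z_{k,n} = f_{c n}^(k−1)(0)`.
Then for every `k ≥ 3` and all `i, j` with `k ≤ i < j`: `0 < c k = z_{k,k}`,
`z_{k,i} < z_{k,j}`, and `z_{k,j} < 1`; i.e. for fixed `k ≥ 3` the sequence
`n ↦ z_{k,n}` (for `n ≥ k`) is strictly increasing and bounded above by `1`. -/
theorem cycle_elements_move_right
    (d : ℕ) (hd : 3 ≤ d) (c : ℕ → ℝ)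
    (hc : ∀ n : ℕ, 2 ≤ n → IsLeast {y : ℝ | 0 < y ∧ Q d (n - 1) y = y} (c n)) :
    (let z : ℕ → ℕ → ℝ := fun k n => (f d (c n))^[k - 1] 0
     ∀ k : ℕ, 3 ≤ k → ∀ i j : ℕ, k ≤ i → i < j →
       0 < c k ∧ c k = z k k ∧ z k i < z k j ∧ z k j < 1) := by
  intro z k hk i j hki hij
  have hd2 : 2 ≤ d := by omega
  have hc : IsLeastFixedPointSeq d c := hc
  refine ⟨hc.pos (by omega), (hc.orbit_eq_self hd2 (by omega)).symm, ?_, ?_⟩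
  · exact orbit_lt_orbit_of_lt hd2 (hc.pos (by omega))
      (hc.strictAntiOn hd2 (mem_Ici.2 (by omega)) (mem_Ici.2 (by omega)) hij)
      (hc.orbitInIcc hd2 (by omega : 2 ≤ i)) (by omega) (by omega)
  · exact orbit_lt_one (by omega) (hc.pos (by omega)) (hc.orbitInIcc hd2 (by omega : 2 ≤ j))
      (by omega) (by omega)
end

section
/- Fix an integer d ≥ 3. For each n ≥ 2 let c_n be the least positive real number with Q_{n−1}(c_n) = c_n, and for k ≥ 1 and n ≥ 2 set z_{k,n} = f_{c_n}^{k−1}(0). Then for all integers i, j with 3 ≤ i < j one has c_j = z_{j,j} < z_{i,j}; that is, within the cycle of length j, every element z_{i,j} with 3 ≤ i < j lies strictly to the right of c_j. -/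
open Filter Topology Set


lemma Q_succ (d k : ℕ) (hk : 1 ≤ k) (y : ℝ) : Q d (k+1) y = f d y (Q d k y) := by
  obtain ⟨m, rfl⟩ : ∃ m, k = m + 1 := ⟨k-1, by omega⟩
  rfl

lemma denom_lt (d : ℕ) (hd : 3 ≤ d) {γ q : ℝ} (hγ0 : 0 < γ) (hγ1 : γ ≤ 1) (hγq : γ ≤ q) :
    ((d:ℝ)-1)*γ^d < (d:ℝ)*q^(d-1) := by
  have hdR : (3:ℝ) ≤ (d:ℝ) := by exact_mod_cast hd
  have h1 : γ^d ≤ γ^(d-1) := pow_le_pow_of_le_one hγ0.le hγ1 (Nat.sub_le d 1)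
  have h2 : γ^(d-1) ≤ q^(d-1) := pow_le_pow_left₀ hγ0.le hγq _
  have h3 : (0:ℝ) < γ^d := pow_pos hγ0 d
  nlinarith

lemma step_lt (d : ℕ) (hd : 3 ≤ d) {γ q : ℝ} (hγ0 : 0 < γ) (hγ1 : γ ≤ 1) (hγq : γ ≤ q)
    (hq1 : q ≤ 1) : f d γ q < q := by
  have hdR : (3:ℝ) ≤ (d:ℝ) := by exact_mod_cast hd
  have hden := denom_lt d hd hγ0 hγ1 hγq
  have hq0 : 0 < q := hγ0.trans_le hγq
  have hpow : q^d = q^(d-1) * q := by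
    have h : d - 1 + 1 = d := by omega
    calc q^d = q^(d-1+1) := by rw [h]
      _ = q^(d-1) * q := pow_succ q (d-1)
  have hA0 : (0:ℝ) < ((d:ℝ)-1)*γ^d := mul_pos (by linarith) (pow_pos hγ0 d)
  have key : (0:ℝ) ≤ ((d:ℝ)-1)*γ^d * (1 - q) := mul_nonneg hA0.le (by linarith)
  simp only [f]
  rw [div_lt_iff_of_neg (by linarith : ((d:ℝ)-1)*γ^d - (d:ℝ)*q^(d-1) < 0)]
  nlinarith [pow_pos hq0 d]

lemma div_flip (a b c : ℝ) : (a - b)/(a - c) = (b - a)/(c - a) := by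
  rw [← neg_sub b a, ← neg_sub c a, neg_div_neg_eq]

lemma small (d : ℕ) (hd : 3 ≤ d) (N : ℕ) (hN : 2 ≤ N) :
    ∃ ε : ℝ, 0 < ε ∧ ε ≤ 1 ∧ ∀ γ : ℝ, 0 < γ → γ ≤ ε → ∀ k, 1 ≤ k → k ≤ N → γ ≤ Q d k γ := by
  have hdR : (3:ℝ) ≤ (d:ℝ) := by exact_mod_cast hd
  have hd0 : (0:ℝ) < d := by linarith
  set θ : ℝ := ((d:ℝ)-1)/d with hθdef
  have hθ0 : 0 < θ := div_pos (by linarith) hd0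
  have hθ1 : θ < 1 := (div_lt_one hd0).2 (by linarith)
  set ε : ℝ := θ^(2*N+2)/d with hεdef
  have hε0 : 0 < ε := by positivity
  have hεθ : ε ≤ θ^(2*N+2) := div_le_self (pow_nonneg hθ0.le _) (by linarith)
  have hεle1 : ε ≤ 1 := le_trans hεθ (pow_le_one₀ hθ0.le hθ1.le)
  refine ⟨ε, hε0, hεle1, ?_⟩
  intro γ hγ0 hγε
  have hγ1 : γ ≤ 1 := le_trans hγε hεle1
  have key : ∀ k, 1 ≤ k → k ≤ N → θ^(2*(k-1)) ≤ Q d k γ := by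
    intro k hk1
    induction k, hk1 using Nat.le_induction with
    | base => intro _; simp [show Q d 1 γ = 1 from rfl]
    | succ k hk IH =>
      intro hk1N
      have hP : θ^(2*(k-1)) ≤ Q d k γ := IH (by omega)
      set q := Q d k γ with hqdef
      have hPθ : γ ≤ θ^(2*(k-1)) := by
        calc γ ≤ ε := hγε
          _ ≤ θ^(2*N+2) := hεθ
          _ ≤ θ^(2*(k-1)) := pow_le_pow_of_le_one hθ0.le hθ1.le (by omega)
      have hγq : γ ≤ q := le_trans hPθ hP
      have hq0 : 0 < q := lt_of_lt_of_le hγ0 hγq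
      have hden := denom_lt d hd hγ0 hγ1 hγq
      have hQ : Q d (k+1) γ = (((d:ℝ)-1)*q^d - ((d:ℝ)-1)*γ^d) /
          ((d:ℝ)*q^(d-1) - ((d:ℝ)-1)*γ^d) := by
        rw [Q_succ d k hk, ← hqdef]
        simp only [f]
        rw [div_flip]
      rw [hQ]
      have hdenpos : (0:ℝ) < (d:ℝ)*q^(d-1) - ((d:ℝ)-1)*γ^d := by linarith
      rw [le_div_iff₀ hdenpos]
      simp only [Nat.add_sub_cancel]
      -- facts for the final inequality
      have hA0 : (0:ℝ) ≤ ((d:ℝ)-1)*γ^d := mul_nonneg (by linarith) (pow_nonneg hγ0.le d)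
      have hγd : γ^d ≤ ε^d := pow_le_pow_left₀ hγ0.le hγε d
      have hεpow : ε^d = θ^((2*N+2)*d)/(d:ℝ)^d := by
        rw [hεdef, div_pow, ← pow_mul]
      have hdd : (d:ℝ) - 1 ≤ (d:ℝ)^d := le_trans (by linarith)
        (le_self_pow₀ (by linarith) (by omega))
      have hA1 : ((d:ℝ)-1)*γ^d ≤ θ^((2*N+2)*d) := by
        have h1 : ((d:ℝ)-1)*γ^d ≤ ((d:ℝ)-1)*(θ^((2*N+2)*d)/(d:ℝ)^d) := by
          rw [← hεpow]
          exact mul_le_mul_of_nonneg_left hγd (by linarith)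
        have h2 : ((d:ℝ)-1)*(θ^((2*N+2)*d)/(d:ℝ)^d) = θ^((2*N+2)*d) * (((d:ℝ)-1)/(d:ℝ)^d) := by
          ring
        have h3 : ((d:ℝ)-1)/(d:ℝ)^d ≤ 1 := (div_le_one (by positivity)).2 hdd
        calc ((d:ℝ)-1)*γ^d ≤ θ^((2*N+2)*d) * (((d:ℝ)-1)/(d:ℝ)^d) := by rw [← h2]; exact h1
          _ ≤ θ^((2*N+2)*d) * 1 := by
              exact mul_le_mul_of_nonneg_left h3 (pow_nonneg hθ0.le _)
          _ = θ^((2*N+2)*d) := mul_one _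
      have hexp : 2*(k-1)*(d-1) + (2*(k-1)+1) ≤ (2*N+2)*d := by
        set K := k - 1 with hK
        have e1 : 2*K*(d-1) + (2*K + 1) = 2*K*d + 1 := by
          have hd1 : d - 1 + 1 = d := by omega
          calc 2*K*(d-1) + (2*K+1) = 2*K*(d-1) + 2*K + 1 := by ring
            _ = 2*K*(d-1+1) + 1 := by rw [Nat.mul_succ]
            _ = 2*K*d + 1 := by rw [hd1]
        have e2 : 2*K*d ≤ 2*N*d := Nat.mul_le_mul_right d (by omega)
        have e3 : (2*N+2)*d = 2*N*d + 2*d := by ring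
        rw [e1, e3]
        have : 1 ≤ 2*d := by omega
        omega
      have hA2 : θ^((2*N+2)*d) ≤ θ^(2*(k-1)*(d-1)) * θ^(2*(k-1)) * θ := by
        calc θ^((2*N+2)*d) ≤ θ^(2*(k-1)*(d-1) + (2*(k-1)+1)) :=
              pow_le_pow_of_le_one hθ0.le hθ1.le hexp
          _ = θ^(2*(k-1)*(d-1)) * θ^(2*(k-1)) * θ := by
              rw [pow_add, pow_succ, ← mul_assoc]
      have hA3 : θ^(2*(k-1)*(d-1)) ≤ q^(d-1) := by
        have := pow_le_pow_left₀ (pow_nonneg hθ0.le (2*(k-1))) hP (d-1)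
        rwa [← pow_mul] at this
      have hA : ((d:ℝ)-1)*γ^d ≤ q^(d-1) * θ^(2*(k-1)) * θ := by
        calc ((d:ℝ)-1)*γ^d ≤ θ^((2*N+2)*d) := hA1
          _ ≤ θ^(2*(k-1)*(d-1)) * θ^(2*(k-1)) * θ := hA2
          _ ≤ q^(d-1) * θ^(2*(k-1)) * θ := by
              apply mul_le_mul_of_nonneg_right _ hθ0.le
              exact mul_le_mul_of_nonneg_right hA3 (pow_nonneg hθ0.le _)
      have hqd : q^d = q^(d-1)*q := by
        have h : d - 1 + 1 = d := by omega
        calc q^d = q^(d-1+1) := by rw [h]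
          _ = q^(d-1) * q := pow_succ q (d-1)
      have hθd : θ^2 * (d:ℝ) = (d:ℝ) - 1 - θ := by
        rw [hθdef]; field_simp
      have h2k : θ^(2*k) = θ^(2*(k-1)) * θ^2 := by
        rw [← pow_add]; congr 1; omega
      -- final: θ^(2k) * (d*q^(d-1) - A) ≤ (d-1)*q^d - A
      have hR0 : (0:ℝ) ≤ q^(d-1) := pow_nonneg hq0.le _
      have hP0 : (0:ℝ) ≤ θ^(2*(k-1)) := pow_nonneg hθ0.le _
      have hfin : ((d:ℝ)-1) * (q^(d-1) * θ^(2*(k-1))) ≤ ((d:ℝ)-1) * (q^(d-1) * q) := by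
        apply mul_le_mul_of_nonneg_left (mul_le_mul_of_nonneg_left hP hR0) (by linarith)
      have t1 : θ^(2*k) * ((d:ℝ)*q^(d-1) - ((d:ℝ)-1)*γ^d) ≤ θ^(2*k) * ((d:ℝ)*q^(d-1)) := by
        apply mul_le_mul_of_nonneg_left (by linarith) (pow_nonneg hθ0.le _)
      have t2 : θ^(2*k) * ((d:ℝ)*q^(d-1)) =
          ((d:ℝ)-1) * (q^(d-1) * θ^(2*(k-1))) - θ * (q^(d-1) * θ^(2*(k-1))) := by
        rw [h2k]
        linear_combination (q^(d-1) * θ^(2*(k-1))) * hθd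
      have t3 : ((d:ℝ)-1) * (q^(d-1) * θ^(2*(k-1))) ≤ ((d:ℝ)-1)*q^d := by
        rw [hqd]; exact hfin
      have t4 : ((d:ℝ)-1)*γ^d ≤ θ * (q^(d-1)*θ^(2*(k-1))) := by
        have hcomm : q^(d-1) * θ^(2*(k-1)) * θ = θ*(q^(d-1)*θ^(2*(k-1))) := by ring
        linarith [hA, hcomm.le, hcomm.ge]
      linarith
  intro k hk1 hkN
  calc γ ≤ θ^(2*(k-1)) := by
        calc γ ≤ ε := hγε
          _ ≤ θ^(2*N+2) := hεθ
          _ ≤ θ^(2*(k-1)) := pow_le_pow_of_le_one hθ0.le hθ1.le (by omega)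
    _ ≤ Q d k γ := key k hk1 hkN

lemma chain (d : ℕ) (hd : 3 ≤ d) (N : ℕ) {γ : ℝ} (hγ0 : 0 < γ) (hγ1 : γ ≤ 1)
    (hq : ∀ k, 1 ≤ k → k ≤ N → γ ≤ Q d k γ) :
    (∀ k, 1 ≤ k → k ≤ N → Q d k γ ≤ 1) ∧
      (∀ k l, 1 ≤ k → k < l → l ≤ N → Q d l γ < Q d k γ) := by
  have hle : ∀ k, 1 ≤ k → k ≤ N → Q d k γ ≤ 1 := by
    intro k hk1
    induction k, hk1 using Nat.le_induction with
    | base => intro _; exact le_of_eq (show Q d 1 γ = 1 from rfl)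
    | succ k hk IH =>
      intro hkN
      have h1 := IH (by omega)
      have := step_lt d hd hγ0 hγ1 (hq k hk (by omega)) h1
      rw [← Q_succ d k hk] at this
      linarith
  have hstep : ∀ k, 1 ≤ k → k+1 ≤ N → Q d (k+1) γ < Q d k γ := by
    intro k hk1 hkN
    rw [Q_succ d k hk1]
    exact step_lt d hd hγ0 hγ1 (hq k hk1 (by omega)) (hle k hk1 (by omega))
  refine ⟨hle, ?_⟩
  intro k l hk1 hkl hlN
  induction l with
  | zero => omega
  | succ l IH =>
    rcases Nat.lt_succ_iff_lt_or_eq.1 hkl with h | h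
    · exact lt_trans (hstep l (by omega) hlN) (IH h (by omega))
    · subst h; exact hstep k hk1 hlN

lemma main_lemma (d : ℕ) (hd : 3 ≤ d) (N : ℕ) (hN : 3 ≤ N) (c : ℝ) (hc0 : 0 < c)
    (hfix : Q d N c = c) (hmin : ∀ y : ℝ, 0 < y → Q d N y = y → c ≤ y) :
    ∀ k, 1 ≤ k → k ≤ N - 1 → c < Q d k c := by
  obtain ⟨ε, hε0, hε1, hsmall⟩ := small d hd N (by omega)
  set B : Set ℝ := {γ | 0 < γ ∧ ∃ k, 1 ≤ k ∧ k ≤ N ∧ Q d k γ < γ} with hBdef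
  have hQ21 : Q d 2 (1:ℝ) = 0 := by
    rw [Q_succ d 1 le_rfl]
    have h1 : Q d 1 (1:ℝ) = 1 := rfl
    rw [h1]
    simp [f]
  have hB1 : (1:ℝ) ∈ B := ⟨one_pos, 2, by omega, by omega, by rw [hQ21]; norm_num⟩
  have hBne : B.Nonempty := ⟨1, hB1⟩
  have hBbdd : BddBelow B := ⟨0, fun β hβ => hβ.1.le⟩
  set b := sInf B with hbdef
  have hεb : ε ≤ b := by
    apply le_csInf hBne
    intro β hβ
    by_contra h
    push_neg at h
    obtain ⟨k, hk1, hkN, hklt⟩ := hβ.2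
    exact absurd hklt (not_lt.2 (hsmall β hβ.1 h.le k hk1 hkN))
  have hb0 : 0 < b := lt_of_lt_of_le hε0 hεb
  have hb1 : b ≤ 1 := csInf_le hBbdd hB1
  have hlow : ∀ γ : ℝ, 0 < γ → γ < b → ∀ k, 1 ≤ k → k ≤ N → γ ≤ Q d k γ := by
    intro γ hγ0 hγb k hk1 hkN
    by_contra h
    push_neg at h
    exact absurd (csInf_le hBbdd (⟨hγ0, k, hk1, hkN, h⟩ : γ ∈ B)) (not_le.2 hγb)
  have H : ∀ k, 1 ≤ k → k ≤ N → ContinuousAt (Q d k) b ∧ b ≤ Q d k b ∧ Q d k b ≤ 1 := by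
    intro k hk1
    induction k, hk1 using Nat.le_induction with
    | base =>
      intro _
      refine ⟨?_, by exact hb1.trans_eq rfl, le_rfl⟩
      have : Q d 1 = fun _ : ℝ => (1:ℝ) := rfl
      rw [this]; exact continuousAt_const
    | succ k hk IH =>
      intro hkN
      obtain ⟨hcont, hge, hle⟩ := IH (by omega)
      have hden : ((d:ℝ)-1)*b^d - (d:ℝ)*(Q d k b)^(d-1) < 0 := by
        have := denom_lt d hd hb0 hb1 hge
        linarith
      have hcont' : ContinuousAt (Q d (k+1)) b := by
        obtain ⟨m, rfl⟩ : ∃ m, k = m + 1 := ⟨k-1, by omega⟩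
        have hfun : Q d (m+1+1) = fun y : ℝ =>
            (((d : ℝ) - 1) * y ^ d - ((d : ℝ) - 1) * (Q d (m + 1) y) ^ d) /
              (((d : ℝ) - 1) * y ^ d - (d : ℝ) * (Q d (m + 1) y) ^ (d - 1)) := rfl
        rw [hfun]
        have h1 : ContinuousAt (fun y : ℝ => ((d:ℝ)-1)*y^d) b :=
          (continuous_const.mul (continuous_pow d)).continuousAt
        exact (h1.sub (continuousAt_const.mul (hcont.pow d))).div
          (h1.sub (continuousAt_const.mul (hcont.pow (d-1)))) hden.ne
      have hge' : b ≤ Q d (k+1) b := by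
        have hIoo : Set.Ioo (0:ℝ) b ∈ 𝓝[<] b := Ioo_mem_nhdsLT_of_mem ⟨hb0, le_refl b⟩
        have hev : ∀ᶠ γ in 𝓝[<] b, γ ≤ Q d (k+1) γ := by
          filter_upwards [hIoo] with γ hγ
          exact hlow γ hγ.1 hγ.2 (k+1) (by omega) hkN
        exact le_of_tendsto_of_tendsto (tendsto_id.mono_left nhdsWithin_le_nhds)
          (hcont'.tendsto.mono_left nhdsWithin_le_nhds) hev
      have hlt' : Q d (k+1) b < Q d k b := by
        rw [Q_succ d k hk]
        exact step_lt d hd hb0 hb1 hge hle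
      exact ⟨hcont', hge', hlt'.le.trans hle⟩
  have hqb : ∀ k, 1 ≤ k → k ≤ N → b ≤ Q d k b := fun k h1 h2 => (H k h1 h2).2.1
  have hchainb := chain d hd N hb0 hb1 hqb
  have hQNb : Q d N b = b := by
    rcases eq_or_lt_of_le (hqb N (by omega) le_rfl) with h | h
    · exact h.symm
    · exfalso
      have hall : ∀ k, 1 ≤ k → k ≤ N → b < Q d k b := by
        intro k hk1 hkN
        rcases eq_or_lt_of_le hkN with hkN' | hkN'
        · subst hkN'; exact h
        · exact lt_trans h (hchainb.2 k N hk1 hkN' le_rfl)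
      have hev : ∀ᶠ γ in 𝓝 b, ∀ k ∈ Finset.Icc 1 N, γ < Q d k γ := by
        rw [Filter.eventually_all_finset]
        intro k hk
        rw [Finset.mem_Icc] at hk
        exact ContinuousAt.eventually_lt continuousAt_id (H k hk.1 hk.2).1 (hall k hk.1 hk.2)
      obtain ⟨δ, hδ0, hδ⟩ := Metric.eventually_nhds_iff.1 hev
      obtain ⟨β, hβB, hβlt⟩ := (csInf_lt_iff hBbdd hBne).1
        (show sInf B < b + δ by rw [← hbdef]; linarith)
      have hbβ : b ≤ β := csInf_le hBbdd hβB
      have hdist : dist β b < δ := by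
        rw [Real.dist_eq, abs_of_nonneg (by linarith)]
        linarith
      obtain ⟨k, hk1, hkN, hklt⟩ := hβB.2
      exact absurd hklt (not_lt.2 (le_of_lt (hδ hdist k (Finset.mem_Icc.2 ⟨hk1, hkN⟩))))
  have hcb : c ≤ b := hmin b hb0 hQNb
  have hqc : ∀ k, 1 ≤ k → k ≤ N → c ≤ Q d k c := by
    rcases lt_or_eq_of_le hcb with h | h
    · exact fun k hk1 hkN => hlow c hc0 h k hk1 hkN
    · intro k hk1 hkN; rw [h]; exact hqb k hk1 hkN
  have hc1 : c ≤ 1 := hcb.trans hb1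
  have hchainc := chain d hd N hc0 hc1 hqc
  intro k hk1 hkN1
  have := hchainc.2 k N hk1 (by omega) le_rfl
  rwa [hfix] at this


/-- Fix `d ≥ 3`.  For each `n ≥ 2` let `c n` be the least positive real with
`Q_{n−1}(c n) = c n`, and for `k ≥ 1`, `n ≥ 2` set `z_{k,n} = f_{c n}^(k−1)(0)`.
Then for all `i, j` with `3 ≤ i < j` one has `c j = z_{j,j} < z_{i,j}`: within the cycle
of length `j`, every element `z_{i,j}` with `3 ≤ i < j` lies strictly to the right of
`c j`. -/
theorem cycle_elements_right_of_last
    (d : ℕ) (hd : 3 ≤ d) (c : ℕ → ℝ)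
    (hc : ∀ n : ℕ, 2 ≤ n → IsLeast {y : ℝ | 0 < y ∧ Q d (n - 1) y = y} (c n)) :
    (let z : ℕ → ℕ → ℝ := fun k n => (f d (c n))^[k - 1] 0
     ∀ i j : ℕ, 3 ≤ i → i < j → c j = z j j ∧ z j j < z i j) := by
  intro z i j hi hij
  have hj : 4 ≤ j := by omega
  obtain ⟨⟨hc0, hfix⟩, hmin⟩ := hc j (by omega)
  have hdR : (3:ℝ) ≤ (d:ℝ) := by exact_mod_cast hd
  have hA : ((d:ℝ)-1) * (c j)^d ≠ 0 := ne_of_gt (mul_pos (by linarith) (pow_pos hc0 d))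
  have hf0 : f d (c j) 0 = 1 := by
    simp only [f]
    rw [zero_pow (by omega : d ≠ 0), zero_pow (by omega : d - 1 ≠ 0)]
    rw [mul_zero, mul_zero, sub_zero]
    exact div_self hA
  have hiter : ∀ k, 1 ≤ k → (f d (c j))^[k] 0 = Q d k (c j) := by
    intro k hk1
    induction k, hk1 using Nat.le_induction with
    | base =>
      rw [Function.iterate_one, hf0]
      rfl
    | succ k hk IH =>
      rw [Function.iterate_succ_apply', IH, Q_succ d k hk]
  have hmain := main_lemma d hd (j-1) (by omega) (c j) hc0 hfix
    (fun y hy hQ => hmin (⟨hy, hQ⟩ : y ∈ {y : ℝ | 0 < y ∧ Q d (j - 1) y = y}))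
  have hzjj : z j j = c j := by
    simp only [z]
    rw [hiter (j-1) (by omega), hfix]
  have hzij : z i j = Q d (i-1) (c j) := by
    simp only [z]
    exact hiter (i-1) (by omega)
  refine ⟨hzjj.symm, ?_⟩
  rw [hzjj, hzij]
  exact hmain (i-1) (by omega) (by omega)
end
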